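/- arXiv:1804.09091 — 8 statements merged into one kernel-verified Lean document; each statement's English description precedes it below -/
import Mathlib

section
/- The number of partitions that are simultaneously t1-core and t2-core, where t1 and t2 are coprime positive integers, equals (t1+t2-1)!/(t1! * t2!). -/
/-!
A partition `Y` is encoded by its beta-set `B`, the hook lengths of its first column. The hook
lengths of `Y` are exactly the differences `β - γ` with `β ∈ B`, `γ ∉ B`, `γ < β`, so `Y` is a
`t`-core iff `B` is closed under `x ↦ x - t`. Put `a = t1`, `b = t2`. By coprimality every
natural number is either in the semigroup `ℕa + ℕb` or uniquely of the form `b m - a k` with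
`m < a`, `a k ≤ b m`; a set `B ∌ 0` closed under subtracting `a` and `b` avoids the semigroup,
and it contains `b m - a k` exactly when `k > D m`, where `D` is a lattice path under the
diagonal of the `a × b` rectangle (`D` monotone, `a D m ≤ b m`). Recording the positions
`D m + m` of its steps identifies these paths with the `a`-subsets `T` of `ℤ/(a+b)` satisfying
a ballot condition. By the cycle lemma exactly one rotation of each `a`-subset is ballot: the
height `a x - (a+b) #(T ∩ [0, x))` is `(a+b)`-periodic and injective on a period modulo
`a + b`, so it has a unique maximum, and the ballot rotation starts there. Hence the number of
cores is `C(a+b, a) / (a+b) = (a+b-1)! / (a! b!)`.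
-/

def hook (Y : YoungDiagram) (i j : ℕ) : ℕ :=
  (Y.rowLen i - j) + (Y.colLen j - i) - 1

def IsCore (Y : YoungDiagram) (t : ℕ) : Prop :=
  ∀ c ∈ Y.cells, ¬ (t ∣ hook Y c.1 c.2)

def DistinctParts (Y : YoungDiagram) : Prop :=
  ∀ i : ℕ, 0 < Y.rowLen (i + 1) → Y.rowLen (i + 1) < Y.rowLen i

def betaSet (Y : YoungDiagram) : Finset ℕ :=
  (Finset.range (Y.colLen 0)).image (fun i => Y.rowLen i + (Y.colLen 0 - 1 - i))

open Finset Pointwise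

lemma StrictMono.val_sub_val_le_sub {k : ℕ} {f : Fin k → ℕ} (hf : StrictMono f) {i j : Fin k}
    (hij : i ≤ j) : (j : ℕ) - i ≤ f j - f i := by
  have h := card_le_card_of_injOn f (s := Icc i j) (t := Icc (f i) (f j))
    (fun x hx => by
      rw [coe_Icc] at hx ⊢
      exact ⟨hf.monotone hx.1, hf.monotone hx.2⟩) hf.injective.injOn
  rw [Fin.card_Icc, Nat.card_Icc] at h
  have := hf.monotone hij
  omega

lemma StrictMono.val_add_apply_zero_le {k : ℕ} {f : Fin k → ℕ} (hf : StrictMono f) (i : Fin k) :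
    (i : ℕ) + f ⟨0, i.pos⟩ ≤ f i := by
  have h0 : (⟨0, i.pos⟩ : Fin k) ≤ i := Nat.zero_le _
  have h := hf.val_sub_val_le_sub h0
  rw [Fin.val_mk, Nat.sub_zero] at h
  have := hf.monotone h0
  omega

lemma StrictMono.monotone_sub_val {k : ℕ} {f : Fin k → ℕ} (hf : StrictMono f) :
    Monotone fun i => f i - i := fun i j hij => by
  have := hf.val_sub_val_le_sub hij
  have := hf.val_add_apply_zero_le i
  have := hf.monotone hij
  dsimp only
  omega

lemma Monotone.le_of_card_filter_lt {k x : ℕ} {f : Fin k → ℕ} (hf : Monotone f)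
    (hc : #{m | f m < x} < k) : x ≤ f ⟨#{m | f m < x}, hc⟩ := by
  by_contra h
  push Not at h
  have hsub : Iic (⟨_, hc⟩ : Fin k) ⊆ univ.filter (fun m => f m < x) := fun m hm =>
    mem_filter.2 ⟨mem_univ _, (hf (mem_Iic.1 hm)).trans_lt h⟩
  have := card_le_card hsub
  rw [Fin.card_Iic, Fin.val_mk] at this
  omega

lemma Finset.card_filter_lt_orderEmbOfFin {α : Type*} [LinearOrder α] (s : Finset α) {k : ℕ}
    (h : #s = k) (i : Fin k) : #{x ∈ s | x < s.orderEmbOfFin h i} = i := by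
  have : {x ∈ s | x < s.orderEmbOfFin h i} = (Iio i).map (s.orderEmbOfFin h).toEmbedding := by
    ext x
    simp only [mem_filter, mem_map, mem_Iio, RelEmbedding.coe_toEmbedding]
    constructor
    · rintro ⟨hx, hlt⟩
      obtain ⟨j, rfl⟩ : x ∈ Set.range (s.orderEmbOfFin h) := by
        rw [range_orderEmbOfFin]
        exact hx
      exact ⟨j, (s.orderEmbOfFin h).lt_iff_lt.1 hlt, rfl⟩
    · rintro ⟨j, hj, rfl⟩
      exact ⟨orderEmbOfFin_mem s h j, (s.orderEmbOfFin h).lt_iff_lt.2 hj⟩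
  rw [this, card_map, Fin.card_Iio]

lemma Finset.val_lt_orderEmbOfFin {s : Finset ℕ} {k : ℕ} (h : #s = k) (hs : 0 ∉ s) (i : Fin k) :
    (i : ℕ) < s.orderEmbOfFin h i := by
  have := (s.orderEmbOfFin h).strictMono.val_add_apply_zero_le i
  have h0 : s.orderEmbOfFin h ⟨0, i.pos⟩ ≠ 0 := fun h0 => hs (h0 ▸ orderEmbOfFin_mem s h _)
  omega

/-! ### Beta-sets and cores -/

def IsSubClosed (t : ℕ) (B : Finset ℕ) : Prop := ∀ x ∈ B, t ≤ x → x - t ∈ B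

lemma IsSubClosed.sub_mul_mem {t : ℕ} {B : Finset ℕ} (hB : IsSubClosed t B) {x : ℕ} (hx : x ∈ B)
    (q : ℕ) (hq : t * q ≤ x) : x - t * q ∈ B := by
  induction q with
  | zero => simpa using hx
  | succ q ih =>
    rw [Nat.mul_succ] at hq ⊢
    rw [← Nat.sub_sub]
    exact hB _ (ih (by omega)) (by omega)

namespace YoungDiagram

variable (Y : YoungDiagram)

-- Numbering the unit steps of the boundary of `Y` from its bottom-left corner, the vertical step
-- of row `i` is step `betaNum i` and the horizontal step of column `j` is step `gapNum j`.
def betaNum (i : ℕ) : ℕ := Y.rowLen i + (Y.colLen 0 - 1 - i)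

def gapNum (j : ℕ) : ℕ := j + (Y.colLen 0 - Y.colLen j)

variable {Y}

lemma colLen_le_colLen_zero (j : ℕ) : Y.colLen j ≤ Y.colLen 0 := Y.colLen_anti 0 j (Nat.zero_le j)

lemma mem_betaSet {x : ℕ} : x ∈ betaSet Y ↔ ∃ i < Y.colLen 0, Y.betaNum i = x := by
  simp [betaSet, betaNum]

lemma betaNum_lt_betaNum {i i' : ℕ} (hii' : i < i') (hi' : i' < Y.colLen 0) :
    Y.betaNum i' < Y.betaNum i := by
  have := Y.rowLen_anti i i' hii'.le
  unfold betaNum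
  omega

lemma card_betaSet : #(betaSet Y) = Y.colLen 0 := by
  rw [betaSet, card_image_of_injOn, card_range]
  intro i hi i' hi' h
  simp only [coe_range, Set.mem_Iio] at hi hi'
  by_contra hne
  rcases Nat.lt_or_gt_of_ne hne with hlt | hlt
  · exact (betaNum_lt_betaNum hlt hi').ne' h
  · exact (betaNum_lt_betaNum hlt hi).ne h

lemma hook_add_gapNum {i j : ℕ} (h : (i, j) ∈ Y) : hook Y i j + Y.gapNum j = Y.betaNum i := by
  have := mem_iff_lt_rowLen.1 h
  have := mem_iff_lt_colLen.1 h
  have := colLen_le_colLen_zero (Y := Y) j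
  unfold hook gapNum betaNum
  omega

lemma gapNum_lt_betaNum_iff {i j : ℕ} (hi : i < Y.colLen 0) :
    Y.gapNum j < Y.betaNum i ↔ (i, j) ∈ Y := by
  rw [mem_iff_lt_rowLen]
  have := colLen_le_colLen_zero (Y := Y) j
  constructor
  · intro h
    by_contra hle
    push Not at hle
    have := Y.colLen_anti _ _ hle
    have : Y.colLen (Y.rowLen i) ≤ i := by
      by_contra hlt
      exact lt_irrefl _ (mem_iff_lt_rowLen.1 (mem_iff_lt_colLen.2 (not_le.1 hlt)))
    unfold gapNum betaNum at h
    omega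
  · intro h
    have := mem_iff_lt_colLen.1 (mem_iff_lt_rowLen.2 h)
    unfold gapNum betaNum
    omega

lemma betaNum_ne_gapNum {i : ℕ} (hi : i < Y.colLen 0) (j : ℕ) : Y.betaNum i ≠ Y.gapNum j := by
  have := colLen_le_colLen_zero (Y := Y) j
  by_cases hij : (i, j) ∈ Y
  · have := mem_iff_lt_rowLen.1 hij
    have := mem_iff_lt_colLen.1 hij
    unfold betaNum gapNum
    omega
  · have := not_lt.1 (mt mem_iff_lt_rowLen.2 hij)
    have := not_lt.1 (mt mem_iff_lt_colLen.2 hij)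
    unfold betaNum gapNum
    omega

lemma gapNum_notMem_betaSet (j : ℕ) : Y.gapNum j ∉ betaSet Y := by
  rw [mem_betaSet]
  rintro ⟨i, hi, h⟩
  exact betaNum_ne_gapNum hi j h

lemma exists_gapNum_eq {x : ℕ} (hx : x ∉ betaSet Y) : ∃ j, Y.gapNum j = x := by
  by_contra hne
  push Not at hne
  have hex : ∃ j, x < Y.gapNum j := ⟨x + 1, by unfold gapNum; omega⟩
  have hj0 : Nat.find hex ≠ 0 := fun h => by
    have := Nat.find_spec hex
    rw [h] at this
    simp [gapNum] at this
  obtain ⟨j, hj0, hxj, hprev⟩ : ∃ j, j ≠ 0 ∧ x < Y.gapNum j ∧ Y.gapNum (j - 1) < x :=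
    ⟨_, hj0, Nat.find_spec hex, (not_lt.1 (Nat.find_min hex (by omega))).lt_of_ne (hne _)⟩
  have h1 := colLen_le_colLen_zero (Y := Y) (j - 1)
  have h2 := Y.colLen_anti (j - 1) j (Nat.sub_le j 1)
  unfold gapNum at hxj hprev
  -- `x` lies strictly between two consecutive gap numbers, so it is the beta number of the row
  -- of length `j` that ends there.
  obtain ⟨i, hi⟩ : ∃ i, i = j - 1 + Y.colLen 0 - x := ⟨_, rfl⟩
  have hmem : (i, j - 1) ∈ Y := mem_iff_lt_colLen.2 (by omega)
  have hnotMem : (i, j) ∉ Y := fun h => by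
    have := mem_iff_lt_colLen.1 h
    omega
  have hrow : Y.rowLen i = j := by
    have := mem_iff_lt_rowLen.1 hmem
    have := not_lt.1 (mt mem_iff_lt_rowLen.2 hnotMem)
    omega
  refine hx (mem_betaSet.2 ⟨i, by omega, ?_⟩)
  unfold betaNum
  omega

theorem isCore_iff_isSubClosed {t : ℕ} : IsCore Y t ↔ IsSubClosed t (betaSet Y) := by
  constructor
  · intro hcore x hx htx
    by_contra hnot
    obtain ⟨i, hi, rfl⟩ := mem_betaSet.1 hx
    obtain ⟨j, hj⟩ := exists_gapNum_eq hnot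
    rcases Nat.eq_zero_or_pos t with rfl | ht
    · exact hnot (by simpa using hx)
    have hij := (gapNum_lt_betaNum_iff (j := j) hi).1 (by omega)
    have := hook_add_gapNum hij
    exact hcore (i, j) ((mem_cells _).2 hij) (show t ∣ hook Y i j from ⟨1, by omega⟩)
  · rintro hclosed ⟨i, j⟩ hij ⟨q, hq⟩
    rw [mem_cells] at hij
    have hi : i < Y.colLen 0 := (mem_iff_lt_colLen.1 hij).trans_le (colLen_le_colLen_zero j)
    have hsum := hook_add_gapNum hij
    have := hclosed.sub_mul_mem (mem_betaSet.2 ⟨i, hi, rfl⟩) q (by simp only at hq; omega)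
    rw [show Y.betaNum i - t * q = Y.gapNum j by simp only at hq; omega] at this
    exact gapNum_notMem_betaSet j this

lemma zero_notMem_betaSet : 0 ∉ betaSet Y := by
  rw [mem_betaSet]
  rintro ⟨i, hi, h⟩
  have := mem_iff_lt_rowLen.1 (mem_iff_lt_colLen.2 hi : (i, 0) ∈ Y)
  unfold betaNum at h
  omega

-- `B.orderEmbOfFin rfl i.rev` is the `i`-th largest element of `B`.
def rowLensOfBetaSet (B : Finset ℕ) : List ℕ :=
  List.ofFn fun i : Fin #B => B.orderEmbOfFin rfl i.rev - i.rev

lemma sortedGE_rowLensOfBetaSet (B : Finset ℕ) : (rowLensOfBetaSet B).SortedGE := by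
  rw [rowLensOfBetaSet, List.sortedGE_ofFn_iff]
  exact ((B.orderEmbOfFin rfl).strictMono.monotone_sub_val).comp_antitone Fin.rev_anti

def ofBetaSet (B : Finset ℕ) : YoungDiagram :=
  ofRowLens (rowLensOfBetaSet B) (sortedGE_rowLensOfBetaSet B)

section OfBetaSet

variable {B : Finset ℕ}

lemma mem_ofBetaSet {i j : ℕ} : (i, j) ∈ ofBetaSet B ↔
    ∃ h : i < #B, j < B.orderEmbOfFin rfl (Fin.rev ⟨i, h⟩) - (#B - (i + 1)) := by
  simp [ofBetaSet, mem_ofRowLens, rowLensOfBetaSet]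

lemma colLen_zero_ofBetaSet (hB : 0 ∉ B) : (ofBetaSet B).colLen 0 = #B := by
  refine eq_of_forall_lt_iff fun i => ?_
  rw [← mem_iff_lt_colLen, mem_ofBetaSet]
  refine ⟨fun ⟨h, _⟩ => h, fun h => ⟨h, ?_⟩⟩
  have := val_lt_orderEmbOfFin rfl hB (Fin.rev ⟨i, h⟩)
  rw [Fin.val_rev, Fin.val_mk] at this
  omega

lemma rowLen_ofBetaSet {i : ℕ} (hi : i < #B) :
    (ofBetaSet B).rowLen i = B.orderEmbOfFin rfl (Fin.rev ⟨i, hi⟩) - (#B - (i + 1)) :=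
  eq_of_forall_lt_iff fun j => by rw [← mem_iff_lt_rowLen, mem_ofBetaSet]; simp [hi]

lemma betaSet_ofBetaSet (hB : 0 ∉ B) : betaSet (ofBetaSet B) = B := by
  ext x
  rw [mem_betaSet, colLen_zero_ofBetaSet hB]
  constructor
  · rintro ⟨i, hi, rfl⟩
    have := val_lt_orderEmbOfFin rfl hB (Fin.rev ⟨i, hi⟩)
    rw [Fin.val_rev, Fin.val_mk] at this
    rw [betaNum, rowLen_ofBetaSet hi, colLen_zero_ofBetaSet hB,
      show #B - (i + 1) = #B - 1 - i by omega, Nat.sub_add_cancel (by omega)]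
    exact orderEmbOfFin_mem B rfl _
  · intro hx
    obtain ⟨j, rfl⟩ : x ∈ Set.range (B.orderEmbOfFin rfl) := by rwa [range_orderEmbOfFin]
    have := val_lt_orderEmbOfFin rfl hB j
    refine ⟨j.rev, j.rev.isLt, ?_⟩
    rw [betaNum, rowLen_ofBetaSet j.rev.isLt, colLen_zero_ofBetaSet hB, Fin.eta, Fin.rev_rev,
      Fin.val_rev]
    omega

end OfBetaSet

lemma orderEmbOfFin_betaSet (Y : YoungDiagram) (j : Fin #(betaSet Y)) :
    (betaSet Y).orderEmbOfFin rfl j = Y.betaNum (Y.colLen 0 - 1 - j) := by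
  have hlt (j : Fin #(betaSet Y)) : (j : ℕ) < Y.colLen 0 := card_betaSet (Y := Y) ▸ j.isLt
  refine (congrFun (orderEmbOfFin_unique rfl (f := fun j => Y.betaNum (Y.colLen 0 - 1 - j))
    (fun j => mem_betaSet.2 ⟨_, by have := hlt j; omega, rfl⟩)
    fun j j' h => betaNum_lt_betaNum ?_ (by have := hlt j; omega)) j).symm
  have := hlt j'
  have : (j : ℕ) < j' := h
  omega

lemma ofBetaSet_betaSet (Y : YoungDiagram) : ofBetaSet (betaSet Y) = Y := by
  ext ⟨i, j⟩
  rw [mem_cells, mem_cells, mem_ofBetaSet, mem_iff_lt_rowLen]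
  simp only [orderEmbOfFin_betaSet, Fin.val_rev, card_betaSet]
  constructor
  · rintro ⟨hi, hj⟩
    rw [show Y.colLen 0 - 1 - (Y.colLen 0 - (i + 1)) = i by omega, betaNum] at hj
    omega
  · intro hj
    have hi : i < Y.colLen 0 :=
      (mem_iff_lt_colLen.1 (mem_iff_lt_rowLen.2 hj)).trans_le (colLen_le_colLen_zero j)
    refine ⟨hi, ?_⟩
    rw [show Y.colLen 0 - 1 - (Y.colLen 0 - (i + 1)) = i by omega, betaNum]
    omega

noncomputable def betaSetEquiv (a b : ℕ) :
    {Y : YoungDiagram // IsCore Y a ∧ IsCore Y b} ≃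
      {B : Finset ℕ // 0 ∉ B ∧ IsSubClosed a B ∧ IsSubClosed b B} where
  toFun Y := ⟨betaSet Y.1, zero_notMem_betaSet, isCore_iff_isSubClosed.1 Y.2.1,
    isCore_iff_isSubClosed.1 Y.2.2⟩
  invFun B := ⟨ofBetaSet B.1,
    isCore_iff_isSubClosed.2 (by rw [betaSet_ofBetaSet B.2.1]; exact B.2.2.1),
    isCore_iff_isSubClosed.2 (by rw [betaSet_ofBetaSet B.2.1]; exact B.2.2.2)⟩
  left_inv Y := Subtype.ext (ofBetaSet_betaSet Y.1)
  right_inv B := Subtype.ext (betaSet_ofBetaSet B.2.1)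

end YoungDiagram

/-! ### Rational Dyck paths and closed sets -/

def IsRationalDyck (a b : ℕ) (D : Fin a → ℕ) : Prop := Monotone D ∧ ∀ m, a * D m ≤ b * m

section DyckBetaSet

variable {a b : ℕ}

lemma eq_of_mul_sub_mul_eq (hab : a.Coprime b) {m m' k k' : ℕ} (hm : m < a) (hm' : m' < a)
    (hk : a * k ≤ b * m) (hk' : a * k' ≤ b * m') (h : b * m - a * k = b * m' - a * k') :
    m = m' ∧ k = k' := by
  have hmod : b * m ≡ b * m' [MOD a] := by
    rw [show b * m = (b * m - a * k) + a * k by omega,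
      show b * m' = (b * m' - a * k') + a * k' by omega, h]
    exact (Nat.ModEq.refl _).add (by simp [Nat.ModEq])
  have hmm := Nat.ModEq.cancel_left_of_coprime hab hmod
  rw [Nat.ModEq, Nat.mod_eq_of_lt hm, Nat.mod_eq_of_lt hm'] at hmm
  subst hmm
  have hak : a * k = a * k' := by omega
  exact ⟨rfl, Nat.eq_of_mul_eq_mul_left (by omega) hak⟩

lemma exists_eq_mul_sub_or_eq_mul_add (hab : a.Coprime b) (ha : 0 < a) (x : ℕ) :
    ∃ m < a, ∃ k, (a * k ≤ b * m ∧ x = b * m - a * k) ∨ x = b * m + a * k := by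
  obtain ⟨m, hm, hmod⟩ := Nat.exists_mul_mod_eq_of_coprime x hab.symm ha.ne'
  refine ⟨m, hm, ?_⟩
  rcases le_total x (b * m) with hle | hle
  · obtain ⟨k, hk⟩ := (Nat.modEq_iff_dvd' hle).1 hmod.symm
    exact ⟨k, Or.inl ⟨by omega, by omega⟩⟩
  · obtain ⟨k, hk⟩ := (Nat.modEq_iff_dvd' hle).1 hmod
    exact ⟨k, Or.inr (by omega)⟩

lemma mul_add_mul_notMem_of_isSubClosed {B : Finset ℕ} (hBa : IsSubClosed a B)
    (hBb : IsSubClosed b B) (hB0 : 0 ∉ B) (m k : ℕ) : b * m + a * k ∉ B := by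
  intro h
  have h1 := hBa.sub_mul_mem h k (by omega)
  rw [Nat.add_sub_cancel] at h1
  have h2 := hBb.sub_mul_mem h1 m le_rfl
  rw [Nat.sub_self] at h2
  exact hB0 h2

def dyckBetaSet (a b : ℕ) (D : Fin a → ℕ) : Finset ℕ :=
  univ.biUnion fun m : Fin a => (Ioc (D m) (b * m / a)).image fun k => b * m - a * k

lemma mem_dyckBetaSet {D : Fin a → ℕ} {x : ℕ} :
    x ∈ dyckBetaSet a b D ↔ ∃ m : Fin a, ∃ k, D m < k ∧ a * k ≤ b * m ∧ b * m - a * k = x := by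
  simp only [dyckBetaSet, mem_biUnion, mem_univ, true_and, mem_image, mem_Ioc]
  refine exists_congr fun m => exists_congr fun k => ?_
  rw [Nat.le_div_iff_mul_le m.pos, mul_comm k, and_assoc]

lemma mul_sub_mul_mem_dyckBetaSet_iff (hab : a.Coprime b) {D : Fin a → ℕ} {m : Fin a} {k : ℕ}
    (hk : a * k ≤ b * m) : b * m - a * k ∈ dyckBetaSet a b D ↔ D m < k := by
  constructor
  · rintro hx
    obtain ⟨m', k', hlt, hk', heq⟩ := mem_dyckBetaSet.1 hx
    obtain ⟨hm, rfl⟩ := eq_of_mul_sub_mul_eq hab m'.isLt m.isLt hk' hk heq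
    rwa [← Fin.ext hm]
  · exact fun h => mem_dyckBetaSet.2 ⟨m, k, h, hk, rfl⟩

lemma zero_notMem_dyckBetaSet (hab : a.Coprime b) (D : Fin a → ℕ) : 0 ∉ dyckBetaSet a b D := by
  intro h
  obtain ⟨m, k, hlt, hk, heq⟩ := mem_dyckBetaSet.1 h
  have := (eq_of_mul_sub_mul_eq (m' := 0) (k' := 0) hab m.isLt m.pos hk (by simp)
    (by simpa using heq)).2
  omega

lemma isSubClosed_dyckBetaSet (D : Fin a → ℕ) : IsSubClosed a (dyckBetaSet a b D) := by
  intro x hx hax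
  obtain ⟨m, k, hlt, hk, rfl⟩ := mem_dyckBetaSet.1 hx
  rw [Nat.sub_sub, ← Nat.mul_succ]
  exact mem_dyckBetaSet.2 ⟨m, k + 1, by omega, by rw [Nat.mul_succ]; omega, rfl⟩

lemma IsRationalDyck.isSubClosed_dyckBetaSet {D : Fin a → ℕ} (hD : IsRationalDyck a b D) :
    IsSubClosed b (dyckBetaSet a b D) := by
  intro x hx hbx
  obtain ⟨m, k, hlt, hk, rfl⟩ := mem_dyckBetaSet.1 hx
  rcases Nat.eq_zero_or_pos b with rfl | hb
  · simpa using hx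
  have hm : 0 < (m : ℕ) := Nat.pos_of_ne_zero fun h => by simp [h] at hbx; omega
  have hbm : b * m = b * (m - 1) + b := by rw [← Nat.mul_succ]; congr 1; omega
  refine mem_dyckBetaSet.2
    ⟨⟨m - 1, by omega⟩, k, (hD.1 (Fin.mk_le_of_le_val (by omega))).trans_lt hlt, ?_, ?_⟩ <;>
    dsimp only <;> omega

noncomputable def dyckPath (a b : ℕ) (B : Finset ℕ) (m : Fin a) : ℕ :=
  sInf {d | ∀ k, d < k → a * k ≤ b * m → b * m - a * k ∈ B}

lemma dyckPath_le {B : Finset ℕ} {m : Fin a} {d : ℕ}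
    (hd : ∀ k, d < k → a * k ≤ b * m → b * m - a * k ∈ B) : dyckPath a b B m ≤ d :=
  Nat.sInf_le hd

lemma mul_sub_mul_mem_of_dyckPath_lt {B : Finset ℕ} {m : Fin a} {k : ℕ}
    (hlt : dyckPath a b B m < k) (hk : a * k ≤ b * m) : b * m - a * k ∈ B :=
  Nat.sInf_mem (s := {d | ∀ k, d < k → a * k ≤ b * m → b * m - a * k ∈ B})
    ⟨b * m / a, fun _ hk hak =>
      absurd ((Nat.le_div_iff_mul_le m.pos).2 (by rwa [mul_comm])) hk.not_ge⟩
    k hlt hk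

lemma mul_sub_mul_mem_iff_dyckPath_lt {B : Finset ℕ} (hBa : IsSubClosed a B)
    (hBb : IsSubClosed b B) (hB0 : 0 ∉ B) {m : Fin a} {k : ℕ} (hk : a * k ≤ b * m) :
    b * m - a * k ∈ B ↔ dyckPath a b B m < k := by
  refine ⟨fun hx => ?_, fun hlt => mul_sub_mul_mem_of_dyckPath_lt hlt hk⟩
  have hk0 : k ≠ 0 := by
    rintro rfl
    exact mul_add_mul_notMem_of_isSubClosed hBa hBb hB0 m 0 (by simpa using hx)
  suffices dyckPath a b B m ≤ k - 1 by omega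
  refine dyckPath_le fun k' hk' hak' => ?_
  have h := hBa.sub_mul_mem hx (k' - k) (by rw [Nat.mul_sub]; omega)
  rwa [Nat.sub_sub, ← Nat.mul_add, Nat.add_sub_cancel' (by omega)] at h

lemma isRationalDyck_dyckPath {B : Finset ℕ} (hBb : IsSubClosed b B) :
    IsRationalDyck a b (dyckPath a b B) := by
  refine ⟨fun m m' hmm' => dyckPath_le fun k hk hak => ?_, fun m => ?_⟩
  · have hbm : b * m ≤ b * m' := Nat.mul_le_mul_left b hmm'
    have h := hBb.sub_mul_mem (mul_sub_mul_mem_of_dyckPath_lt hk (hak.trans hbm)) (m' - m)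
      (by rw [Nat.mul_sub]; omega)
    rwa [show b * m' - a * k - b * (m' - m) = b * m - a * k by rw [Nat.mul_sub]; omega] at h
  · have h : dyckPath a b B m ≤ b * m / a := dyckPath_le
      fun _ hk hak => absurd ((Nat.le_div_iff_mul_le m.pos).2 (by rwa [mul_comm])) hk.not_ge
    calc a * dyckPath a b B m ≤ a * (b * m / a) := Nat.mul_le_mul_left a h
      _ ≤ b * m := Nat.mul_div_le _ _

lemma dyckBetaSet_dyckPath (hab : a.Coprime b) (ha : 0 < a) {B : Finset ℕ} (hBa : IsSubClosed a B)
    (hBb : IsSubClosed b B) (hB0 : 0 ∉ B) : dyckBetaSet a b (dyckPath a b B) = B := by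
  ext x
  refine ⟨fun hx => ?_, fun hx => ?_⟩
  · obtain ⟨m, k, hlt, hk, rfl⟩ := mem_dyckBetaSet.1 hx
    exact mul_sub_mul_mem_of_dyckPath_lt hlt hk
  · obtain ⟨m, hm, k, ⟨hk, rfl⟩ | rfl⟩ := exists_eq_mul_sub_or_eq_mul_add hab ha x
    · exact mem_dyckBetaSet.2
        ⟨⟨m, hm⟩, k, (mul_sub_mul_mem_iff_dyckPath_lt hBa hBb hB0 hk).1 hx, hk, rfl⟩
    · exact absurd hx (mul_add_mul_notMem_of_isSubClosed hBa hBb hB0 m k)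

lemma le_of_dyckBetaSet_subset (hab : a.Coprime b) {D D' : Fin a → ℕ} (hD' : IsRationalDyck a b D')
    (h : dyckBetaSet a b D ⊆ dyckBetaSet a b D') : D' ≤ D := by
  intro m
  by_contra hlt
  push Not at hlt
  have hx := h ((mul_sub_mul_mem_dyckBetaSet_iff hab (hD'.2 m)).2 hlt)
  exact lt_irrefl _ ((mul_sub_mul_mem_dyckBetaSet_iff hab (hD'.2 m)).1 hx)

end DyckBetaSet

noncomputable def dyckBetaSetEquiv {a b : ℕ} (hab : a.Coprime b) (ha : 0 < a) :
    {D : Fin a → ℕ // IsRationalDyck a b D} ≃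
      {B : Finset ℕ // 0 ∉ B ∧ IsSubClosed a B ∧ IsSubClosed b B} :=
  Equiv.ofBijective
    (fun D => ⟨dyckBetaSet a b D.1, zero_notMem_dyckBetaSet hab D.1, isSubClosed_dyckBetaSet D.1,
      D.2.isSubClosed_dyckBetaSet⟩) <| by
    constructor
    · rintro ⟨D, hD⟩ ⟨D', hD'⟩ h
      have h' : dyckBetaSet a b D = dyckBetaSet a b D' := congrArg Subtype.val h
      exact Subtype.ext <| le_antisymm (le_of_dyckBetaSet_subset hab hD h'.ge)
        (le_of_dyckBetaSet_subset hab hD' h'.le)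
    · rintro ⟨B, hB0, hBa, hBb⟩
      exact ⟨⟨dyckPath a b B, isRationalDyck_dyckPath hBb⟩,
        Subtype.ext (dyckBetaSet_dyckPath hab ha hBa hBb hB0)⟩

/-! ### The cycle lemma -/

section CycleLemma

variable {n : ℕ}

def prefixCount (T : Finset (ZMod n)) (x : ℕ) : ℕ := #{i ∈ range x | ((i : ℕ) : ZMod n) ∈ T}

def ballotHeight (a : ℕ) (T : Finset (ZMod n)) (x : ℕ) : ℤ := a * x - n * prefixCount T x

def IsBallot (a : ℕ) (T : Finset (ZMod n)) : Prop := ∀ x, a * x ≤ n * prefixCount T x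

lemma prefixCount_eq_card_filter_val_lt [NeZero n] (T : Finset (ZMod n)) {x : ℕ} (hx : x ≤ n) :
    prefixCount T x = #{y ∈ T | y.val < x} := by
  refine card_nbij' (fun i => (i : ZMod n)) ZMod.val ?_ ?_ ?_ ?_
  · intro i hi
    simp only [coe_filter, mem_range, Set.mem_ofPred_eq] at hi ⊢
    rw [ZMod.val_cast_of_lt (by omega)]
    exact ⟨hi.2, hi.1⟩
  · intro y hy
    simp only [coe_filter, mem_range, Set.mem_ofPred_eq, ZMod.natCast_zmod_val] at hy ⊢
    exact ⟨hy.2, hy.1⟩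
  · intro i hi
    simp only [coe_filter, mem_range, Set.mem_ofPred_eq] at hi
    exact ZMod.val_cast_of_lt (by omega)
  · intro y _
    exact ZMod.natCast_zmod_val y

lemma prefixCount_self [NeZero n] (T : Finset (ZMod n)) : prefixCount T n = #T := by
  rw [prefixCount_eq_card_filter_val_lt T le_rfl, filter_true_of_mem fun y _ => ZMod.val_lt y]

lemma prefixCount_add (T : Finset (ZMod n)) (p x : ℕ) :
    prefixCount T (p + x) = prefixCount T p + prefixCount (-(p : ZMod n) +ᵥ T) x := by
  simp only [prefixCount, card_filter, sum_range_add, mem_neg_vadd_finset_iff]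
  push_cast
  simp only [vadd_eq_add]

lemma ballotHeight_periodic [NeZero n] {a : ℕ} {T : Finset (ZMod n)} (hT : #T = a) :
    Function.Periodic (ballotHeight a T) n := by
  intro x
  rw [ballotHeight, ballotHeight, add_comm x, prefixCount_add, prefixCount_self,
    ZMod.natCast_self, neg_zero, zero_vadd, hT]
  push_cast
  ring

lemma ballotHeight_neg_vadd (a : ℕ) (T : Finset (ZMod n)) (p x : ℕ) :
    ballotHeight a (-(p : ZMod n) +ᵥ T) x = ballotHeight a T (p + x) - ballotHeight a T p := by
  rw [ballotHeight, ballotHeight, ballotHeight, prefixCount_add]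
  push_cast
  ring

lemma eq_of_ballotHeight_eq {a : ℕ} (ha : a.Coprime n) (T : Finset (ZMod n)) {x y : ℕ}
    (hx : x < n) (hy : y < n) (h : ballotHeight a T x = ballotHeight a T y) : x = y := by
  have hmod : a * x ≡ a * y [MOD n] := by
    rw [← ZMod.natCast_eq_natCast_iff]
    have h' := congrArg (fun z : ℤ => (z : ZMod n)) h
    simpa [ballotHeight] using h'
  have := Nat.ModEq.cancel_left_of_coprime (ha.symm) hmod
  rwa [Nat.ModEq, Nat.mod_eq_of_lt hx, Nat.mod_eq_of_lt hy] at this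

lemma isBallot_iff_ballotHeight_nonpos {a : ℕ} {T : Finset (ZMod n)} :
    IsBallot a T ↔ ∀ x, ballotHeight a T x ≤ 0 := by
  simp only [IsBallot, ballotHeight, sub_nonpos]
  exact forall_congr' fun x => by norm_cast

lemma isBallot_iff_forall_lt [NeZero n] {a : ℕ} {T : Finset (ZMod n)} (hT : #T = a) :
    IsBallot a T ↔ ∀ x < n, a * x ≤ n * prefixCount T x := by
  refine ⟨fun h x _ => h x, fun h => isBallot_iff_ballotHeight_nonpos.2 fun x => ?_⟩
  rw [← (ballotHeight_periodic hT).map_mod_nat, ballotHeight, sub_nonpos]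
  exact_mod_cast h _ (Nat.mod_lt x (NeZero.pos n))

lemma isBallot_neg_vadd_iff [NeZero n] {a : ℕ} {T : Finset (ZMod n)} (hT : #T = a) (p : ℕ) :
    IsBallot a (-(p : ZMod n) +ᵥ T) ↔ ∀ y, ballotHeight a T y ≤ ballotHeight a T p := by
  rw [isBallot_iff_ballotHeight_nonpos]
  simp only [ballotHeight_neg_vadd, sub_nonpos]
  constructor
  · intro h y
    obtain ⟨k, hk⟩ : ∃ k, n = k + 1 := ⟨n - 1, (Nat.succ_pred_eq_of_pos (NeZero.pos n)).symm⟩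
    have hy := h (y + k * p)
    have hper := (ballotHeight_periodic hT).nat_mul p
    rw [Nat.cast_id] at hper
    rwa [show p + (y + k * p) = y + p * n by rw [hk]; ring, hper y] at hy
  · exact fun h x => h (p + x)

theorem existsUnique_isBallot_vadd [NeZero n] {a : ℕ} (ha : a.Coprime n) {T : Finset (ZMod n)}
    (hT : #T = a) : ∃! k : ZMod n, IsBallot a (k +ᵥ T) := by
  obtain ⟨p, hp, hmax⟩ :=
    exists_max_image (range n) (ballotHeight a T) ⟨0, mem_range.2 (NeZero.pos n)⟩
  have hmax' : ∀ y, ballotHeight a T y ≤ ballotHeight a T p := fun y => by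
    rw [← (ballotHeight_periodic hT).map_mod_nat y]
    exact hmax _ (mem_range.2 (Nat.mod_lt _ (NeZero.pos n)))
  refine ⟨-(p : ZMod n), (isBallot_neg_vadd_iff hT p).2 hmax', fun k hk => ?_⟩
  rw [← neg_neg k, ← ZMod.natCast_zmod_val (-k), isBallot_neg_vadd_iff hT] at hk
  rw [← neg_neg k, ← ZMod.natCast_zmod_val (-k),
    eq_of_ballotHeight_eq ha T (ZMod.val_lt _) (mem_range.1 hp) (le_antisymm (hmax' _) (hk p))]

noncomputable def isBallotVaddEquiv [NeZero n] {a : ℕ} (ha : a.Coprime n) :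
    {T : Finset (ZMod n) // #T = a ∧ IsBallot a T} × ZMod n ≃ {T : Finset (ZMod n) // #T = a} :=
  Equiv.ofBijective (fun p => ⟨p.2 +ᵥ p.1.1, (card_vadd_finset _ _).trans p.1.2.1⟩) <| by
    constructor
    · rintro ⟨⟨T, hT, hTb⟩, k⟩ ⟨⟨T', hT', hTb'⟩, k'⟩ h
      have hU : k' +ᵥ T' = k +ᵥ T := (congrArg Subtype.val h).symm
      have hUcard : #(k +ᵥ T) = a := (card_vadd_finset _ _).trans hT
      obtain ⟨_, _, huniq⟩ := existsUnique_isBallot_vadd ha hUcard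
      have hk : -k = -k' := by
        rw [huniq (-k) (by simpa only [neg_vadd_vadd] using hTb),
          huniq (-k') (by simpa only [← hU, neg_vadd_vadd] using hTb')]
      obtain rfl : k = k' := neg_injective hk
      obtain rfl : T = T' := by simpa using congrArg (-k +ᵥ ·) hU.symm
      rfl
    · rintro ⟨U, hU⟩
      obtain ⟨k, hk, -⟩ := existsUnique_isBallot_vadd ha hU
      exact ⟨⟨⟨k +ᵥ U, (card_vadd_finset _ _).trans hU, hk⟩, -k⟩, Subtype.ext (neg_vadd_vadd k U)⟩

theorem card_isBallot_mul [NeZero n] {a : ℕ} (ha : a.Coprime n) :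
    Nat.card {T : Finset (ZMod n) // #T = a ∧ IsBallot a T} * n = n.choose a := by
  have h := Nat.card_congr (isBallotVaddEquiv ha)
  rwa [Nat.card_prod, Nat.card_zmod,
    Nat.card_eq_fintype_card (α := {T : Finset (ZMod n) // #T = a}), Fintype.card_finset_len,
    ZMod.card] at h

/-! ### Dyck paths as ballot subsets -/

section StepSet

variable {a b : ℕ}

-- `D m + m` is the position of the `m`-th north step of the lattice path `D`.
def stepSet (a b : ℕ) (D : Fin a → ℕ) : Finset (ZMod (a + b)) :=
  univ.image fun m : Fin a => ((D m + m : ℕ) : ZMod (a + b))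

namespace IsRationalDyck

variable {D : Fin a → ℕ} (hD : IsRationalDyck a b D)
include hD

lemma strictMono_add : StrictMono fun m : Fin a => D m + m :=
  hD.1.add_strictMono Fin.val_strictMono

lemma mul_add_le (m : Fin a) : a * (D m + m) ≤ (a + b) * m := by
  have := hD.2 m
  rw [mul_add, add_mul]
  omega

lemma add_lt (m : Fin a) : D m + m < a + b := by
  refine Nat.lt_of_mul_lt_mul_left (a := a) ((hD.mul_add_le m).trans_lt ?_)
  rw [mul_comm a]
  exact Nat.mul_lt_mul_of_pos_left m.isLt (by have := m.pos; omega)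

lemma val_cast (m : Fin a) : ((D m + m : ℕ) : ZMod (a + b)).val = D m + m :=
  ZMod.val_cast_of_lt (hD.add_lt m)

lemma injective_cast : Function.Injective fun m : Fin a => ((D m + m : ℕ) : ZMod (a + b)) :=
  fun m m' h => hD.strictMono_add.injective <| by
    simpa only [hD.val_cast] using congrArg ZMod.val h

lemma card_stepSet : #(stepSet a b D) = a := by
  rw [stepSet, card_image_of_injective _ hD.injective_cast, card_univ, Fintype.card_fin]

lemma image_val_stepSet : (stepSet a b D).image ZMod.val = univ.image fun m => D m + m := by
  rw [stepSet, image_image]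
  exact image_congr fun m _ => hD.val_cast m

lemma prefixCount_stepSet [NeZero (a + b)] {x : ℕ} (hx : x ≤ a + b) :
    prefixCount (stepSet a b D) x = #{m | D m + m < x} := by
  rw [prefixCount_eq_card_filter_val_lt _ hx, stepSet, filter_image,
    card_image_of_injective _ hD.injective_cast]
  exact congrArg card (filter_congr fun m _ => by rw [hD.val_cast])

lemma isBallot_stepSet [NeZero (a + b)] : IsBallot a (stepSet a b D) := by
  refine (isBallot_iff_forall_lt hD.card_stepSet).2 fun x hx => ?_
  rw [hD.prefixCount_stepSet hx.le]
  by_cases hc : #{m | D m + m < x} < a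
  · have h := hD.strictMono_add.monotone.le_of_card_filter_lt hc
    calc a * x ≤ a * (D _ + _) := Nat.mul_le_mul_left a h
      _ ≤ _ := hD.mul_add_le _
  · have : #{m | D m + m < x} = a :=
      le_antisymm ((card_filter_le _ _).trans (by rw [card_univ, Fintype.card_fin])) (not_lt.1 hc)
    rw [this, mul_comm (a + b)]
    exact Nat.mul_le_mul_left a hx.le

end IsRationalDyck

lemma exists_stepSet_eq [NeZero (a + b)] {T : Finset (ZMod (a + b))} (hT : #T = a)
    (hTb : IsBallot a T) : ∃ D, IsRationalDyck a b D ∧ stepSet a b D = T := by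
  set S := T.image ZMod.val
  have hS : #S = a := by rw [card_image_of_injective _ (ZMod.val_injective _), hT]
  set τ := S.orderEmbOfFin hS
  have hτlt (m : Fin a) : τ m < a + b := by
    obtain ⟨y, -, hy⟩ := mem_image.1 (orderEmbOfFin_mem S hS m)
    rw [← hy]
    exact ZMod.val_lt y
  have hcount (m : Fin a) : prefixCount T (τ m) = m := by
    rw [prefixCount_eq_card_filter_val_lt T (hτlt m).le, ← card_filter_lt_orderEmbOfFin S hS m,
      filter_image, card_image_of_injective _ (ZMod.val_injective _)]
  have hle (m : Fin a) : (m : ℕ) ≤ τ m :=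
    (Nat.le_add_right _ _).trans (τ.strictMono.val_add_apply_zero_le m)
  have hτT : (univ.image τ).image (fun v : ℕ => (v : ZMod (a + b))) = T := by
    rw [image_orderEmbOfFin_univ, image_image]
    simp [Function.comp_def]
  refine ⟨fun m => τ m - m, ⟨τ.strictMono.monotone_sub_val, fun m => ?_⟩, ?_⟩
  · have h := hTb (τ m)
    rw [hcount m, add_mul] at h
    dsimp only
    rw [Nat.mul_sub]
    omega
  · have : (fun m : Fin a => ((τ m - m + m : ℕ) : ZMod (a + b))) =
        (fun v : ℕ => (v : ZMod (a + b))) ∘ τ :=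
      funext fun m => by rw [Nat.sub_add_cancel (hle m), Function.comp_apply]
    rw [stepSet, this, ← image_image, hτT]

noncomputable def stepSetEquiv [NeZero (a + b)] :
    {D : Fin a → ℕ // IsRationalDyck a b D} ≃
      {T : Finset (ZMod (a + b)) // #T = a ∧ IsBallot a T} :=
  Equiv.ofBijective (fun D => ⟨stepSet a b D.1, D.2.card_stepSet, D.2.isBallot_stepSet⟩) <| by
    constructor
    · rintro ⟨D, hD⟩ ⟨D', hD'⟩ h
      have h' : stepSet a b D = stepSet a b D' := congrArg Subtype.val h
      have hrange := congrArg (fun T => ((T.image ZMod.val : Finset ℕ) : Set ℕ)) h'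
      simp only [hD.image_val_stepSet, hD'.image_val_stepSet, coe_image, coe_univ,
        Set.image_univ] at hrange
      have hτ := (hD.strictMono_add.range_inj hD'.strictMono_add).1 hrange
      exact Subtype.ext (funext fun m => by simpa using congrFun hτ m)
    · rintro ⟨T, hT, hTb⟩
      obtain ⟨D, hD, rfl⟩ := exists_stepSet_eq hT hTb
      exact ⟨⟨D, hD⟩, rfl⟩

end StepSet

lemma eq_factorial_div_of_mul_eq_choose {a b G : ℕ} (hab : 0 < a + b)
    (h : G * (a + b) = (a + b).choose a) :
    G = (a + b - 1).factorial / (a.factorial * b.factorial) := by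
  have hfac := Nat.choose_mul_factorial_mul_factorial (Nat.le_add_right a b)
  rw [Nat.add_sub_cancel_left, ← h, ← Nat.mul_factorial_pred hab.ne'] at hfac
  have hG : (a + b - 1).factorial = G * (a.factorial * b.factorial) :=
    Nat.eq_of_mul_eq_mul_left hab (by rw [← hfac]; ring)
  rw [hG, Nat.mul_div_cancel _ (Nat.mul_pos (Nat.factorial_pos a) (Nat.factorial_pos b))]

theorem anderson_general (t1 t2 : ℕ) (h1 : 0 < t1) (h : Nat.Coprime t1 t2) :
    {Y : YoungDiagram | IsCore Y t1 ∧ IsCore Y t2}.ncard =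
      Nat.factorial (t1 + t2 - 1) / (Nat.factorial t1 * Nat.factorial t2) := by
  have : NeZero (t1 + t2) := ⟨by omega⟩
  rw [← Nat.card_coe_set_eq]
  refine (Nat.card_congr ((YoungDiagram.betaSetEquiv t1 t2).trans
    ((dyckBetaSetEquiv h h1).symm.trans stepSetEquiv))).trans ?_
  exact eq_factorial_div_of_mul_eq_choose (by omega)
    (card_isBallot_mul (Nat.coprime_self_add_right.2 h))

theorem anderson (t1 t2 : ℕ) (h1 : 0 < t1) (h2 : 0 < t2) (h : Nat.Coprime t1 t2) :
    {Y : YoungDiagram | IsCore Y t1 ∧ IsCore Y t2}.ncard =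
      Nat.factorial (t1 + t2 - 1) / (Nat.factorial t1 * Nat.factorial t2) :=
  anderson_general t1 t2 h1 h
end CycleLemma
end

section
/- For positive integers d and n, the number M_d(n) of (n, dn+1)-core partitions with distinct parts satisfies M_d(-1)=0, M_d(0)=1, and M_d(n)=M_d(n-1)+d·M_d(n-2) for n ≥ 1. -/
noncomputable def Mcount (d n : ℕ) : ℕ :=
  {Y : YoungDiagram | DistinctParts Y ∧ IsCore Y n ∧ IsCore Y (d * n + 1)}.ncard

/-!
A partition `Y` with `k` parts is encoded by its beta-set `B = {Y_i + k - 1 - i}` of first-column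
hook lengths, a finite set of positive integers, and every such set arises. The hook lengths of
`Y` are the differences `b - x` with `b ∈ B`, `x ∉ B`, `x < b`; hence `Y` is a `t`-core iff `B` is
closed under `x ↦ x - t`, and `Y` has distinct parts iff `B` contains no two consecutive integers.

For `t = n` and `t = dn + 1` this forces every element of `B` to lie below `dn` and off the
multiples of `n`. On the `n`-abacus, `B` is then determined by the numbers `c_1, …, c_{n-1}`
of beads on the nonzero runners, subject to `c_a ≤ d` and `c_a c_{a+1} = 0`, and any such word
comes from some `B`. Words of length `m` of this kind are counted by the Lucas sequence
`U_{m+2}`, where `U_0 = 0`, `U_1 = 1`, `U_{m+2} = U_{m+1} + d U_m`; so `M_d(n) = U_{n+1}`.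
-/

namespace NathSellers

open Finset YoungDiagram

section Auxiliary

variable {d n x : ℕ}

lemma lt_card_filter_range_iff {p : ℕ → Prop} [DecidablePred p] (hp : Antitone p) {j : ℕ} :
    j < #{i ∈ range d | p i} ↔ j < d ∧ p j := by
  constructor
  · intro hj
    by_contra! h
    have hsub : {i ∈ range d | p i} ⊆ range j := fun i hi ↦ by
      simp only [mem_filter, mem_range] at hi ⊢
      by_contra! hji
      exact h (by omega) (hp hji hi.2)
    exact (card_le_card hsub).trans_eq (card_range j) |>.not_gt hj
  · rintro ⟨hjd, hpj⟩
    have hsub : range (j + 1) ⊆ {i ∈ range d | p i} := fun i hi ↦ by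
      simp only [mem_filter, mem_range] at hi ⊢
      exact ⟨by omega, hp (by omega) hpj⟩
    simpa using card_le_card hsub

lemma getD_le_of_forall_le {l : List ℕ} (hl : ∀ c ∈ l, c ≤ d) (i : ℕ) : l.getD i 0 ≤ d := by
  rcases lt_or_ge i l.length with h | h
  · rw [List.getD_eq_getElem _ _ h]
    exact hl _ (List.getElem_mem h)
  · rw [List.getD_eq_default _ _ h]
    exact d.zero_le

lemma add_one_mod_of_pos (h : 0 < (x + 1) % n) :
    (x + 1) % n = x % n + 1 ∧ (x + 1) / n = x / n := by
  have hdiv : (x + 1) / n = x / n := by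
    rw [Nat.succ_div, if_neg fun hd ↦ h.ne' (Nat.mod_eq_zero_of_dvd hd), add_zero]
  have := Nat.div_add_mod x n
  have := Nat.div_add_mod (x + 1) n
  rw [hdiv] at this
  exact ⟨by omega, hdiv⟩

end Auxiliary

section BetaNumbers

variable {Y : YoungDiagram} {i j x : ℕ}

def beta (Y : YoungDiagram) (i : ℕ) : ℕ := Y.rowLen i + (Y.colLen 0 - 1 - i)

lemma mem_betaSet : x ∈ betaSet Y ↔ ∃ i < Y.colLen 0, beta Y i = x := by
  simp [betaSet, beta]

lemma beta_mem_betaSet (hi : i < Y.colLen 0) : beta Y i ∈ betaSet Y :=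
  mem_betaSet.2 ⟨i, hi, rfl⟩

lemma rowLen_pos_iff : 0 < Y.rowLen i ↔ i < Y.colLen 0 := by
  rw [← mem_iff_lt_rowLen, mem_iff_lt_colLen]

lemma colLen_le_colLen_zero (Y : YoungDiagram) (j : ℕ) : Y.colLen j ≤ Y.colLen 0 :=
  Y.colLen_anti 0 j j.zero_le

lemma lt_rowLen_of_mem (h : (i, j) ∈ Y) : j < Y.rowLen i := mem_iff_lt_rowLen.1 h

lemma lt_colLen_of_mem (h : (i, j) ∈ Y) : i < Y.colLen j := mem_iff_lt_colLen.1 h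

lemma beta_strictAntiOn (Y : YoungDiagram) : StrictAntiOn (beta Y) (Set.Iio (Y.colLen 0)) := by
  intro i₁ _ i₂ (h₂ : i₂ < _) h
  have := Y.rowLen_anti i₁ i₂ h.le
  unfold beta; omega

lemma card_betaSet (Y : YoungDiagram) : #(betaSet Y) = Y.colLen 0 := by
  rw [← card_range (Y.colLen 0)]
  exact card_image_of_injOn fun _ h₁ _ h₂ ↦
    (beta_strictAntiOn Y).injOn (by simpa using h₁) (by simpa using h₂)

lemma zero_notMem_betaSet (Y : YoungDiagram) : 0 ∉ betaSet Y := by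
  rw [mem_betaSet]
  rintro ⟨i, hi, h⟩
  have := rowLen_pos_iff.2 hi
  unfold beta at h; omega

/-- The complement of `betaSet Y`, listed in increasing order. -/
def gap (Y : YoungDiagram) (j : ℕ) : ℕ := j + (Y.colLen 0 - Y.colLen j)

lemma gap_strictMono (Y : YoungDiagram) : StrictMono (gap Y) := by
  refine strictMono_nat_of_lt_succ fun j ↦ ?_
  have := Y.colLen_anti j (j + 1) j.le_succ
  have := colLen_le_colLen_zero Y j
  unfold gap; omega

lemma beta_eq_hook_add_gap (h : (i, j) ∈ Y) : beta Y i = hook Y i j + gap Y j := by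
  have := lt_rowLen_of_mem h
  have := lt_colLen_of_mem h
  have := colLen_le_colLen_zero Y j
  unfold beta hook gap; omega

lemma gap_notMem_betaSet (Y : YoungDiagram) (j : ℕ) : gap Y j ∉ betaSet Y := by
  rw [mem_betaSet]
  rintro ⟨i, hi, h⟩
  have := colLen_le_colLen_zero Y j
  have hcell : j < Y.rowLen i ↔ i < Y.colLen j := mem_iff_lt_rowLen.symm.trans mem_iff_lt_colLen
  unfold beta gap at h
  omega

lemma beta_lt_gap_rowLen (hi : i < Y.colLen 0) : beta Y i < gap Y (Y.rowLen i) := by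
  have : Y.colLen (Y.rowLen i) ≤ i := by
    by_contra! h
    exact (lt_irrefl _) (lt_rowLen_of_mem (mem_iff_lt_colLen.2 h))
  unfold beta gap; omega

/-- The beta-numbers and the gaps partition `ℕ`: below `colLen 0 + rowLen 0` by counting, and
above it every number is a gap of an empty column. -/
lemma mem_betaSet_or_exists_gap_eq (Y : YoungDiagram) (x : ℕ) :
    x ∈ betaSet Y ∨ ∃ j, gap Y j = x := by
  set k := Y.colLen 0
  set L := Y.rowLen 0
  by_cases hx : x < k + L
  · have hsub : betaSet Y ∪ (range L).image (gap Y) ⊆ range (k + L) := by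
      intro y hy
      simp only [mem_union, mem_image, mem_range, mem_betaSet] at hy ⊢
      rcases hy with ⟨i, hi, rfl⟩ | ⟨j, hj, rfl⟩
      · have := Y.rowLen_anti 0 i i.zero_le
        unfold beta; omega
      · have := colLen_le_colLen_zero Y j
        unfold gap; omega
    have hcard : #(range (k + L)) ≤ #(betaSet Y ∪ (range L).image (gap Y)) := by
      rw [card_union_of_disjoint, card_betaSet, card_image_of_injective _ (gap_strictMono Y).injective]
      · simp [k]
      · exact disjoint_right.2 fun y hy ↦ by
          obtain ⟨j, -, rfl⟩ := mem_image.1 hy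
          exact gap_notMem_betaSet Y j
    have := (eq_of_subset_of_card_le hsub hcard).symm ▸ mem_range.2 hx
    simp only [mem_union, mem_image] at this
    exact this.imp id fun ⟨j, _, h⟩ ↦ ⟨j, h⟩
  · refine .inr ⟨x - k, ?_⟩
    have : Y.colLen (x - k) = 0 := by
      by_contra! h
      have := lt_rowLen_of_mem (mem_iff_lt_colLen.2 (Nat.pos_of_ne_zero h))
      omega
    unfold gap; omega

lemma exists_gap_eq_of_lt_beta (hi : i < Y.colLen 0) (hx : x < beta Y i) (hxB : x ∉ betaSet Y) :
    ∃ j < Y.rowLen i, gap Y j = x := by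
  obtain hxB' | ⟨j, rfl⟩ := mem_betaSet_or_exists_gap_eq Y x
  · exact absurd hxB' hxB
  refine ⟨j, ?_, rfl⟩
  by_contra! hj
  exact (hx.trans (beta_lt_gap_rowLen hi)).not_ge ((gap_strictMono Y).monotone hj)

end BetaNumbers

section CoresAndDistinctParts

def SubClosed (t : ℕ) (B : Finset ℕ) : Prop := ∀ x ∈ B, t ≤ x → x - t ∈ B

def NoConsecutive (B : Finset ℕ) : Prop := ∀ x ∈ B, x + 1 ∉ B

variable {Y : YoungDiagram} {B : Finset ℕ} {t x : ℕ}

lemma SubClosed.sub_mul_mem (h : SubClosed t B) (hx : x ∈ B) {m : ℕ} (hm : m * t ≤ x) :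
    x - m * t ∈ B := by
  induction m with
  | zero => simpa
  | succ m ih =>
    rw [add_one_mul] at hm ⊢
    rw [← Nat.sub_sub]
    exact h _ (ih (by omega)) (by omega)

lemma SubClosed.not_dvd (h : SubClosed t B) (h0 : 0 ∉ B) (hx : x ∈ B) : ¬ t ∣ x := by
  rintro ⟨m, rfl⟩
  have := h.sub_mul_mem hx (m := m) (mul_comm m t).le
  rw [mul_comm, Nat.sub_self] at this
  exact h0 this

lemma isCore_iff_subClosed (ht : 0 < t) : IsCore Y t ↔ SubClosed t (betaSet Y) := by
  constructor
  · intro hcore b hb htb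
    obtain ⟨i, hi, rfl⟩ := mem_betaSet.1 hb
    by_contra hnot
    obtain ⟨j, hj, hgap⟩ := exists_gap_eq_of_lt_beta hi (by omega) hnot
    have hmem : (i, j) ∈ Y := mem_iff_lt_rowLen.2 hj
    have hhook : hook Y i j = t := by have := beta_eq_hook_add_gap hmem; omega
    exact hcore (i, j) ((mem_cells _).2 hmem) (hhook ▸ dvd_rfl)
  · rintro hcl ⟨i, j⟩ hc ⟨m, hm⟩
    have hmem : (i, j) ∈ Y := (mem_cells _).1 hc
    have hbeta := beta_eq_hook_add_gap hmem
    have hi : i < Y.colLen 0 := (lt_colLen_of_mem hmem).trans_le (colLen_le_colLen_zero Y j)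
    have := hcl.sub_mul_mem (beta_mem_betaSet hi) (m := m) (by rw [hbeta, hm, mul_comm]; omega)
    rw [show beta Y i - m * t = gap Y j by rw [hbeta, hm, mul_comm]; omega] at this
    exact gap_notMem_betaSet Y j this

lemma beta_eq_beta_succ {i : ℕ} (hi : i + 1 < Y.colLen 0) :
    beta Y i = beta Y (i + 1) + 1 + (Y.rowLen i - Y.rowLen (i + 1)) := by
  have := Y.rowLen_anti i (i + 1) i.le_succ
  unfold beta; omega

lemma distinctParts_iff_noConsecutive : DistinctParts Y ↔ NoConsecutive (betaSet Y) := by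
  constructor
  · intro hd x hx hx1
    obtain ⟨a, ha, rfl⟩ := mem_betaSet.1 hx
    obtain ⟨b, hb, hab⟩ := mem_betaSet.1 hx1
    have hba : b < a := ((beta_strictAntiOn Y).lt_iff_gt ha hb).1 (by omega)
    have hb1 : b + 1 < Y.colLen 0 := by omega
    have := (beta_strictAntiOn Y).antitoneOn (a := b + 1) hb1 ha (by omega)
    have := hd b (rowLen_pos_iff.2 hb1)
    have := beta_eq_beta_succ hb1
    omega
  · intro hnc i hpos
    have hi := rowLen_pos_iff.1 hpos
    by_contra! hle
    have h := beta_eq_beta_succ hi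
    rw [Nat.sub_eq_zero_of_le hle, add_zero] at h
    exact hnc _ (beta_mem_betaSet hi) (h ▸ beta_mem_betaSet (by omega))

end CoresAndDistinctParts

section Reconstruction

variable {Y : YoungDiagram} {B : Finset ℕ} {i j : ℕ}

def bead (B : Finset ℕ) (i : ℕ) : ℕ :=
  if h : i < #B then B.orderEmbOfFin rfl ⟨#B - 1 - i, by omega⟩ else 0

lemma bead_mem (h : i < #B) : bead B i ∈ B := by
  rw [bead, dif_pos h]
  exact orderEmbOfFin_mem B rfl _

lemma bead_strictAntiOn (B : Finset ℕ) : StrictAntiOn (bead B) (Set.Iio #B) := by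
  intro i₁ (h₁ : i₁ < #B) i₂ (h₂ : i₂ < #B) h
  rw [bead, bead, dif_pos h₁, dif_pos h₂]
  exact (B.orderEmbOfFin rfl).strictMono (Fin.mk_lt_mk.2 (by omega))

lemma bead_add_le (hij : i ≤ j) (hj : j < #B) : bead B j + (j - i) ≤ bead B i := by
  induction j, hij using Nat.le_induction with
  | base => simp
  | succ j hij ih =>
    have := (bead_strictAntiOn B) (a := j) (by simp; omega) (by simpa using hj) (Nat.lt_add_one j)
    have := ih (by omega)
    omega

lemma card_sub_le_bead (h0 : 0 ∉ B) (hi : i < #B) : #B - i ≤ bead B i := by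
  have hlast := bead_mem (B := B) (i := #B - 1) (by omega)
  have := bead_add_le (B := B) (by omega : i ≤ #B - 1) (by omega)
  have : bead B (#B - 1) ≠ 0 := fun h ↦ h0 (h ▸ hlast)
  omega

lemma image_bead (B : Finset ℕ) : (range #B).image (bead B) = B := by
  refine eq_of_subset_of_card_le (fun x hx ↦ ?_) ?_
  · obtain ⟨i, hi, rfl⟩ := mem_image.1 hx
    exact bead_mem (mem_range.1 hi)
  · rw [card_image_of_injOn fun _ h₁ _ h₂ ↦
      (bead_strictAntiOn B).injOn (by simpa using h₁) (by simpa using h₂), card_range]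

def part (B : Finset ℕ) (i : ℕ) : ℕ := bead B i - (#B - 1 - i)

def ofBetaSet (B : Finset ℕ) : YoungDiagram where
  cells := (range #B).biUnion fun i ↦ {i} ×ˢ range (part B i)
  isLowerSet := by
    rintro ⟨i₂, j₂⟩ ⟨i₁, j₁⟩ ⟨hi : i₁ ≤ i₂, hj : j₁ ≤ j₂⟩ hmem
    simp only [coe_biUnion, coe_range, Set.mem_iUnion, coe_product, Set.mem_prod,
      coe_singleton, Set.mem_singleton_iff, Set.mem_Iio] at hmem ⊢
    obtain ⟨i, hi₂, rfl, hj₂⟩ := hmem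
    have := bead_add_le hi hi₂
    exact ⟨i₁, by omega, rfl, by unfold part at hj₂ ⊢; omega⟩

lemma mem_ofBetaSet : (i, j) ∈ ofBetaSet B ↔ i < #B ∧ j < part B i := by
  change (i, j) ∈ (ofBetaSet B).cells ↔ _
  simp [ofBetaSet]

lemma rowLen_ofBetaSet (hi : i < #B) : (ofBetaSet B).rowLen i = part B i :=
  eq_of_forall_lt_iff fun j ↦ by rw [← mem_iff_lt_rowLen, mem_ofBetaSet, and_iff_right hi]

lemma colLen_zero_ofBetaSet (h0 : 0 ∉ B) : (ofBetaSet B).colLen 0 = #B :=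
  eq_of_forall_lt_iff fun i ↦ by
    rw [← mem_iff_lt_colLen, mem_ofBetaSet, and_iff_left_iff_imp]
    intro hi
    have := card_sub_le_bead h0 hi
    unfold part; omega

lemma betaSet_ofBetaSet (h0 : 0 ∉ B) : betaSet (ofBetaSet B) = B := by
  conv_rhs => rw [← image_bead B]
  rw [betaSet, colLen_zero_ofBetaSet h0]
  refine image_congr fun i hi ↦ ?_
  have hi : i < #B := by simpa using hi
  have := card_sub_le_bead h0 hi
  rw [rowLen_ofBetaSet hi, part]
  omega

lemma bead_betaSet (hi : i < Y.colLen 0) : bead (betaSet Y) i = beta Y i := by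
  have hcard := card_betaSet Y
  set k := #(betaSet Y)
  have hmono : StrictMono fun t : Fin k ↦ beta Y (k - 1 - t) := fun t₁ t₂ h ↦
    (beta_strictAntiOn Y) (show _ < Y.colLen 0 by omega) (show _ < Y.colLen 0 by omega)
      (by rw [Fin.lt_def] at h; omega)
  have huniq := orderEmbOfFin_unique rfl (fun t ↦ beta_mem_betaSet (by omega)) hmono
  rw [bead, dif_pos (by omega), ← huniq]
  change beta Y (k - 1 - (k - 1 - i)) = beta Y i
  congr 1
  omega

lemma ofBetaSet_betaSet (Y : YoungDiagram) : ofBetaSet (betaSet Y) = Y := by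
  ext ⟨i, j⟩
  rw [mem_cells, mem_cells, mem_ofBetaSet, mem_iff_lt_rowLen, card_betaSet, part, card_betaSet]
  constructor
  · rintro ⟨hi, hj⟩
    rw [bead_betaSet hi, beta] at hj
    omega
  · intro hj
    have hi := rowLen_pos_iff.1 (by omega : 0 < Y.rowLen i)
    rw [bead_betaSet hi, beta]
    omega

lemma betaSet_injective : Function.Injective betaSet :=
  Function.LeftInverse.injective ofBetaSet_betaSet

lemma ncard_setOf_betaSet (P : Finset ℕ → Prop) :
    {Y | P (betaSet Y)}.ncard = {B | 0 ∉ B ∧ P B}.ncard := by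
  rw [← betaSet_injective.injOn.ncard_image]
  congr 1
  ext B
  constructor
  · rintro ⟨Y, hY, rfl⟩
    exact ⟨zero_notMem_betaSet Y, hY⟩
  · rintro ⟨h0, hP⟩
    exact ⟨ofBetaSet B, by simpa [betaSet_ofBetaSet h0], betaSet_ofBetaSet h0⟩

end Reconstruction

section Words

def lucasU (d : ℕ) : ℕ → ℕ
  | 0 => 0
  | 1 => 1
  | m + 2 => lucasU d (m + 1) + d * lucasU d m

def IsAdmissible (d : ℕ) (l : List ℕ) : Prop :=
  (∀ a ∈ l, a ≤ d) ∧ l.IsChain fun a b ↦ a = 0 ∨ b = 0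

def admissibleWords (d : ℕ) : ℕ → Finset (List ℕ)
  | 0 => {[]}
  | 1 => (range (d + 1)).image fun a ↦ [a]
  | m + 2 => (admissibleWords d (m + 1)).image (0 :: ·) ∪
      (range d ×ˢ admissibleWords d m).image fun p ↦ (p.1 + 1) :: 0 :: p.2

lemma mem_admissibleWords {d : ℕ} :
    ∀ {m : ℕ} {l : List ℕ}, l ∈ admissibleWords d m ↔ l.length = m ∧ IsAdmissible d l
  | 0, l => by rcases l <;> simp [admissibleWords, IsAdmissible]
  | 1, l => by
    rcases l with _ | ⟨a, _ | ⟨b, t⟩⟩ <;> simp [admissibleWords, IsAdmissible]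
  | m + 2, l => by
    simp only [admissibleWords, mem_union, mem_image, mem_product, mem_range,
      mem_admissibleWords (m := m + 1), mem_admissibleWords (m := m)]
    rcases l with _ | ⟨a, _ | ⟨b, t⟩⟩
    · simp
    · simp
    · rcases a with _ | a
      · simp [IsAdmissible, List.isChain_cons_cons]
      · rcases eq_or_ne b 0 with rfl | hb
        · simp [IsAdmissible, List.isChain_cons]
          tauto
        · simp [IsAdmissible, List.isChain_cons_cons, hb, hb.symm]

lemma card_admissibleWords (d : ℕ) : ∀ m, #(admissibleWords d m) = lucasU d (m + 2)
  | 0 => rfl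
  | 1 => by
    rw [admissibleWords, card_image_of_injective _ fun _ _ ↦ List.singleton_inj.1, card_range]
    simp [lucasU, add_comm]
  | m + 2 => by
    rw [admissibleWords, card_union_of_disjoint ?disjoint,
      card_image_of_injective _ List.cons_injective, card_image_of_injective _ ?injective,
      card_product, card_range, card_admissibleWords d (m + 1), card_admissibleWords d m]
    · rfl
    case injective =>
      rintro ⟨a, t⟩ ⟨b, u⟩ h
      simpa using h
    case disjoint =>
      refine disjoint_left.2 fun l h₁ h₂ ↦ ?_
      obtain ⟨_, -, rfl⟩ := mem_image.1 h₁
      obtain ⟨_, -, h⟩ := mem_image.1 h₂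
      simp at h

end Words

section Abacus

variable {d n : ℕ} {B : Finset ℕ} {l : List ℕ} {x : ℕ}

def coreBetaSets (d n : ℕ) : Set (Finset ℕ) :=
  {B | 0 ∉ B ∧ NoConsecutive B ∧ SubClosed n B ∧ SubClosed (d * n + 1) B}

lemma lt_of_mem_coreBetaSets (hB : B ∈ coreBetaSets d n) (hx : x ∈ B) : x < d * n := by
  obtain ⟨h0, hnc, hsubn, hsubdn⟩ := hB
  by_contra! hle
  have hne : x ≠ d * n := fun h ↦ hsubn.not_dvd h0 hx (h ▸ dvd_mul_left n d)
  have h₁ := hsubdn x hx (by omega)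
  have h₂ := hsubn.sub_mul_mem hx hle
  exact hnc _ h₁ (by rwa [show x - (d * n + 1) + 1 = x - d * n by omega])

def runnerCount (d n : ℕ) (B : Finset ℕ) (a : ℕ) : ℕ := #{j ∈ range d | a + j * n ∈ B}

lemma runnerCount_le (a : ℕ) : runnerCount d n B a ≤ d :=
  (card_filter_le _ _).trans_eq (card_range d)

lemma lt_runnerCount_iff (hB : SubClosed n B) {a j : ℕ} :
    j < runnerCount d n B a ↔ j < d ∧ a + j * n ∈ B :=
  lt_card_filter_range_iff fun i j hij h ↦ by
    have hle := Nat.mul_le_mul_right n hij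
    have := hB.sub_mul_mem h (m := j - i) (by rw [Nat.sub_mul]; omega)
    rwa [Nat.sub_mul, show a + j * n - (j * n - i * n) = a + i * n by omega] at this

lemma mem_iff_runnerCount (hn : 0 < n) (hB : B ∈ coreBetaSets d n) :
    x ∈ B ↔ 0 < x % n ∧ x / n < runnerCount d n B (x % n) := by
  rw [lt_runnerCount_iff hB.2.2.1, Nat.mod_add_div' x n]
  refine ⟨fun hx ↦ ⟨?_, ?_, hx⟩, fun h ↦ h.2.2⟩
  · exact Nat.pos_of_ne_zero fun h ↦ hB.2.2.1.not_dvd hB.1 hx (Nat.dvd_of_mod_eq_zero h)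
  · exact (Nat.div_lt_iff_lt_mul hn).2 (lt_of_mem_coreBetaSets hB hx)

def toCounts (d n : ℕ) (B : Finset ℕ) : List ℕ :=
  (List.range (n - 1)).map fun a ↦ runnerCount d n B (a + 1)

def ofCounts (d n : ℕ) (l : List ℕ) : Finset ℕ :=
  {x ∈ range (d * n) | 0 < x % n ∧ x / n < l.getD (x % n - 1) 0}

lemma mem_ofCounts (hn : 0 < n) (hl : ∀ c ∈ l, c ≤ d) :
    x ∈ ofCounts d n l ↔ 0 < x % n ∧ x / n < l.getD (x % n - 1) 0 := by
  simp only [ofCounts, mem_filter, mem_range, and_iff_right_iff_imp]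
  rintro ⟨-, h⟩
  exact (Nat.div_lt_iff_lt_mul hn).1 (h.trans_le (getD_le_of_forall_le hl _))

lemma getD_toCounts {a : ℕ} (ha : a < n - 1) :
    (toCounts d n B).getD a 0 = runnerCount d n B (a + 1) := by
  simp [toCounts, ha]

lemma toCounts_mem_admissibleWords (hB : B ∈ coreBetaSets d n) :
    toCounts d n B ∈ admissibleWords d (n - 1) := by
  refine mem_admissibleWords.2 ⟨by simp [toCounts], ?_, ?_⟩
  · simp only [toCounts, List.mem_map]
    rintro _ ⟨a, -, rfl⟩
    exact runnerCount_le _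
  · rw [toCounts, List.isChain_map, List.isChain_range]
    intro a _
    by_contra! h
    have h₁ := ((lt_runnerCount_iff hB.2.2.1).1 (Nat.pos_of_ne_zero h.1)).2
    have h₂ := ((lt_runnerCount_iff hB.2.2.1).1 (Nat.pos_of_ne_zero h.2)).2
    simp only [zero_mul, add_zero] at h₁ h₂
    exact hB.2.1 _ h₁ h₂

lemma ofCounts_mem_coreBetaSets (hn : 0 < n) (hl : l ∈ admissibleWords d (n - 1)) :
    ofCounts d n l ∈ coreBetaSets d n := by
  obtain ⟨hlen, hle, hchain⟩ := mem_admissibleWords.1 hl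
  have hmem {x : ℕ} := mem_ofCounts (x := x) hn hle
  refine ⟨by simp [ofCounts], ?_, ?_, ?_⟩
  · intro x hx hx₁
    rw [hmem] at hx hx₁
    obtain ⟨hmod, hdiv⟩ := add_one_mod_of_pos hx₁.1
    rw [hmod, hdiv, Nat.add_sub_cancel] at hx₁
    have hlt : x % n + 1 < n := hmod ▸ Nat.mod_lt _ hn
    have := List.isChain_iff_getElem.1 hchain (x % n - 1) (by omega)
    rw [← List.getD_eq_getElem (d := 0), ← List.getD_eq_getElem (d := 0),
      Nat.sub_add_cancel hx.1] at this
    rcases this with h | h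
    · exact Nat.not_lt_zero _ (h ▸ hx.2)
    · exact Nat.not_lt_zero _ (h ▸ hx₁.2)
  · intro x hx hnx
    obtain ⟨y, rfl⟩ : ∃ y, x = y + n := ⟨x - n, by omega⟩
    rw [hmem, Nat.add_mod_right, Nat.add_div_right _ hn] at hx
    rw [Nat.add_sub_cancel, hmem]
    exact ⟨hx.1, by omega⟩
  · intro x hx _
    have := mem_range.1 (mem_filter.1 hx).1
    omega

lemma ofCounts_toCounts (hn : 0 < n) (hB : B ∈ coreBetaSets d n) :
    ofCounts d n (toCounts d n B) = B := by
  have hle := (mem_admissibleWords.1 (toCounts_mem_admissibleWords hB)).2.1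
  ext x
  rw [mem_ofCounts hn hle, mem_iff_runnerCount hn hB]
  refine and_congr_right fun hx ↦ ?_
  have := Nat.mod_lt x hn
  rw [getD_toCounts (by omega), Nat.sub_add_cancel hx]

lemma toCounts_ofCounts (hn : 0 < n) (hl : l ∈ admissibleWords d (n - 1)) :
    toCounts d n (ofCounts d n l) = l := by
  obtain ⟨hlen, hle, -⟩ := mem_admissibleWords.1 hl
  refine List.ext_getElem (by simp [toCounts, hlen]) fun a ha _ ↦ ?_
  have ha : a < n - 1 := by simpa [toCounts] using ha
  simp only [toCounts, List.getElem_map, List.getElem_range]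
  refine eq_of_forall_lt_iff fun j ↦ ?_
  rw [lt_runnerCount_iff (ofCounts_mem_coreBetaSets hn hl).2.2.1, mem_ofCounts hn hle,
    Nat.add_mul_mod_self_right, Nat.add_mul_div_right _ _ hn, Nat.mod_eq_of_lt (by omega),
    Nat.div_eq_of_lt (by omega), zero_add, Nat.add_sub_cancel, List.getD_eq_getElem _ _ (by omega)]
  have := hle _ (List.getElem_mem (by omega : a < l.length))
  omega

lemma ncard_coreBetaSets (hn : 0 < n) : (coreBetaSets d n).ncard = lucasU d (n + 1) := by
  have himage : coreBetaSets d n = ofCounts d n '' (admissibleWords d (n - 1)) := by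
    ext B
    refine ⟨fun hB ↦ ⟨_, toCounts_mem_admissibleWords hB, ofCounts_toCounts hn hB⟩, ?_⟩
    rintro ⟨l, hl, rfl⟩
    exact ofCounts_mem_coreBetaSets hn hl
  have hinj : Set.InjOn (ofCounts d n) (admissibleWords d (n - 1)) :=
    Set.LeftInvOn.injOn (f₁' := toCounts d n) fun l hl ↦ toCounts_ofCounts hn hl
  rw [himage, hinj.ncard_image, Set.ncard_coe_finset, card_admissibleWords,
    show n - 1 + 2 = n + 1 by omega]

end Abacus

lemma Mcount_eq_lucasU (d : ℕ) {n : ℕ} (hn : 0 < n) : Mcount d n = lucasU d (n + 1) := by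
  simp_rw [Mcount, distinctParts_iff_noConsecutive, isCore_iff_subClosed hn,
    isCore_iff_subClosed (Nat.succ_pos (d * n))]
  exact (ncard_setOf_betaSet _).trans (ncard_coreBetaSets hn)

end NathSellers

theorem nath_sellers_general (d : ℕ) :
    ∃ M : ℤ → ℕ, M (-1) = 0 ∧ M 0 = 1 ∧
      (∀ n : ℤ, 1 ≤ n → M n = M (n - 1) + d * M (n - 2)) ∧
      (∀ n : ℤ, 1 ≤ n → M n = Mcount d n.toNat) := by
  refine ⟨fun z ↦ NathSellers.lucasU d (z + 1).toNat, rfl, rfl, fun n hn ↦ ?_, fun n hn ↦ ?_⟩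
  · dsimp only
    rw [show (n + 1).toNat = (n - 2 + 1).toNat + 2 by omega,
      show (n - 1 + 1).toNat = (n - 2 + 1).toNat + 1 by omega]
    rfl
  · dsimp only
    rw [NathSellers.Mcount_eq_lucasU d (by omega : 0 < n.toNat)]
    congr 1
    omega

theorem nath_sellers (d : ℕ) (hd : 1 ≤ d) :
    ∃ M : ℤ → ℕ, M (-1) = 0 ∧ M 0 = 1 ∧
      (∀ n : ℤ, 1 ≤ n → M n = M (n - 1) + d * M (n - 2)) ∧
      (∀ n : ℤ, 1 ≤ n → M n = Mcount d n.toNat) :=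
  nath_sellers_general d
end

section
/- If d ≠ 2, then M_d(n) = (d(d-1)N_d(n) - N_d(n+1))/(d(d-2)), where M_d and N_d are the sequences defined by M_d(-1)=0, M_d(0)=1, M_d(n)=M_d(n-1)+d·M_d(n-2), and N_d(1)=1, N_d(2)=d, N_d(n)=N_d(n-1)+d·N_d(n-2). -/
theorem stmt5 (d : ℕ) (hd : 1 ≤ d) (hd2 : d ≠ 2) (M N : ℕ → ℚ)
    (hM0 : M 0 = 1) (hM1 : M 1 = 1)
    (hMrec : ∀ n : ℕ, M (n + 2) = M (n + 1) + d * M n)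
    (hN1 : N 1 = 1) (hN2 : N 2 = d)
    (hNrec : ∀ n : ℕ, N (n + 3) = N (n + 2) + d * N (n + 1)) :
    ∀ n : ℕ, 1 ≤ n →
      M n = ((d : ℚ) * ((d : ℚ) - 1) * N n - N (n + 1)) / ((d : ℚ) * ((d : ℚ) - 2)) := by
  have hd0 : (d : ℚ) ≠ 0 := by
    exact Nat.cast_ne_zero.mpr (by omega)
  have hd2' : (d : ℚ) - 2 ≠ 0 := by
    intro h
    apply hd2
    have : (d : ℚ) = 2 := by linarith
    exact_mod_cast this
  have key : ∀ n : ℕ,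
      M (n + 1) = ((d : ℚ) * ((d : ℚ) - 1) * N (n + 1) - N (n + 2)) / ((d : ℚ) * ((d : ℚ) - 2))
      ∧ M (n + 2) = ((d : ℚ) * ((d : ℚ) - 1) * N (n + 2) - N (n + 3)) / ((d : ℚ) * ((d : ℚ) - 2)) := by
    intro n
    induction n with
    | zero =>
      constructor
      · rw [hM1, hN1, hN2]
        field_simp
        ring
      · rw [hMrec 0, hM1, hM0, hN2, hNrec 0, hN2, hN1]
        field_simp
        ring
    | succ k ih =>
      refine ⟨ih.2, ?_⟩
      rw [show k + 1 + 2 = k + 3 by ring, hMrec (k + 1), ih.1, ih.2,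
        show k + 3 + 1 = (k + 1) + 3 by ring, hNrec (k + 1), hNrec k]
      field_simp
      ring
  intro n hn
  obtain ⟨m, rfl⟩ := Nat.exists_eq_add_of_le hn
  rw [add_comm]
  exact (key m).1
end

section
/- The generating function of the number of nice subsets of A(d,n) equals (dq+1)/(1-q-dq^2); that is, the sum over n ≥ 0 of |B(d,n)| q^n = (dq+1)/(1-q-dq^2), where B(d,n) is the set of nice subsets of the d × n grid. -/
/-! Every column of a nice set is an initial segment `[1, k]`, and two adjacent columns cannot
both be nonempty, since both would contain their cell in row 1. So either the last column is
empty, leaving a nice set on `n` columns, or it has one of `d` nonempty shapes and the column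
before it is empty, leaving a nice set on `n - 1` columns. Hence `g (n + 1) = g n + d g (n - 1)`
with `g 0 = 1`, which says exactly that `(1 - q - d q²) ∑ g n qⁿ = 1 + d q`. -/

def gridA (d n : ℕ) : Finset (ℕ × ℕ) := Finset.Icc 1 d ×ˢ Finset.Icc 1 n

def Nice (d n : ℕ) (I : Finset (ℕ × ℕ)) : Prop :=
  I ⊆ gridA d n ∧
  (∀ i j : ℕ, 1 ≤ i → (i + 1, j) ∈ I → (i, j) ∈ I) ∧
  (∀ j : ℕ, 1 ≤ j → j ≤ n - 1 → (1, j) ∈ I → (1, j + 1) ∉ I)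

noncomputable def Gcount (d n : ℕ) : ℕ := {I : Finset (ℕ × ℕ) | Nice d n I}.ncard

open PowerSeries in
theorem mk_mul_eq_of_recurrence {R : Type*} [CommRing R] {a : ℕ → R} {c : R}
    (h : ∀ n, a (n + 1) = a n + c * a (n - 1)) :
    mk a * (1 - X - C c * X ^ 2) = C (a 0) * (C c * X + 1) := by
  have hexp : mk a * (1 - X - C c * X ^ 2) =
      mk a - mk a * X ^ 1 - C c * (mk a * X ^ 2) := by
    ring
  ext n
  rw [hexp]
  rcases n with _ | _ | n
  · simp
  · simp [coeff_mul_X_pow', h 0]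
    ring
  · simp [coeff_mul_X_pow', h (n + 1)]

open Finset

@[simp]
lemma mem_gridA {d n i j : ℕ} : (i, j) ∈ gridA d n ↔ (1 ≤ i ∧ i ≤ d) ∧ 1 ≤ j ∧ j ≤ n := by
  simp [gridA]

lemma gridA_mono {d m n : ℕ} (h : m ≤ n) : gridA d m ⊆ gridA d n :=
  product_subset_product_right (Icc_subset_Icc_right h)

def column (k c : ℕ) : Finset (ℕ × ℕ) := Icc 1 k ×ˢ {c}

@[simp]
lemma mem_column {k c i j : ℕ} : (i, j) ∈ column k c ↔ (1 ≤ i ∧ i ≤ k) ∧ j = c := by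
  simp [column, eq_comm]

@[simp]
lemma card_column (k c : ℕ) : #(column k c) = k := by
  simp [column]

lemma column_subset_gridA {d n k c : ℕ} (hk : k ≤ d) (hc1 : 1 ≤ c) (hcn : c ≤ n) :
    column k c ⊆ gridA d n := by
  rintro ⟨i, j⟩
  simp only [mem_column, mem_gridA]
  omega

def IsNicePattern (I : Finset (ℕ × ℕ)) : Prop :=
  (∀ i j : ℕ, 1 ≤ i → (i + 1, j) ∈ I → (i, j) ∈ I) ∧
  ∀ j : ℕ, 1 ≤ j → (1, j) ∈ I → (1, j + 1) ∉ I

/-- Inside the grid, the restriction `j ≤ n - 1` in `Nice` is automatic. -/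
lemma nice_iff {d n : ℕ} {I : Finset (ℕ × ℕ)} :
    Nice d n I ↔ I ⊆ gridA d n ∧ IsNicePattern I := by
  refine ⟨fun ⟨hsub, hdown, hrow⟩ => ⟨hsub, hdown, fun j hj h1 h2 => ?_⟩,
    fun ⟨hsub, hdown, hrow⟩ => ⟨hsub, hdown, fun j hj _ => hrow j hj⟩⟩
  have := mem_gridA.1 (hsub h2)
  exact hrow j hj (by omega) h1 h2

lemma isNicePattern_empty : IsNicePattern ∅ := by
  simp [IsNicePattern]

namespace IsNicePattern

variable {I : Finset (ℕ × ℕ)}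

lemma mem_of_le (hI : IsNicePattern I) {i j k : ℕ} (hij : (i, j) ∈ I) (hk : 1 ≤ k)
    (hki : k ≤ i) : (k, j) ∈ I := by
  induction i, hki using Nat.le_induction with
  | base => exact hij
  | succ i hki ih => exact ih (hI.1 i j (hk.trans hki) hij)

lemma filter_snd (hI : IsNicePattern I) (p : ℕ → Prop) [DecidablePred p] :
    IsNicePattern (I.filter fun x => p x.2) := by
  simp only [IsNicePattern, mem_filter]
  exact ⟨fun i j hi h => ⟨hI.1 i j hi h.1, h.2⟩, fun j hj h1 h2 => hI.2 j hj h1.1 h2.1⟩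

lemma column_union {J : Finset (ℕ × ℕ)} (hJ : IsNicePattern J) (k c : ℕ)
    (hJc : ∀ x ∈ J, x.2 + 1 < c) : IsNicePattern (column k c ∪ J) := by
  refine ⟨fun i j hi h => ?_, fun j hj h1 h2 => ?_⟩
  · rcases mem_union.1 h with h | h
    · rw [mem_column] at h
      exact mem_union_left _ (mem_column.2 ⟨⟨hi, by omega⟩, h.2⟩)
    · exact mem_union_right _ (hJ.1 i j hi h)
  · rcases mem_union.1 h1 with h1 | h1 <;> rcases mem_union.1 h2 with h2 | h2
    · exact absurd ((mem_column.1 h1).2.trans (mem_column.1 h2).2.symm) (by omega)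
    · have := hJc _ h2
      rw [mem_column] at h1
      omega
    · have := hJc _ h1
      rw [mem_column] at h2
      omega
    · exact hJ.2 j hj h1 h2

lemma filter_snd_eq_column (hI : IsNicePattern I) {d n : ℕ} (hsub : I ⊆ gridA d n) (c : ℕ) :
    ∃ k ≤ d, I.filter (fun x => x.2 = c) = column k c := by
  classical
  set S := (I.filter fun x => x.2 = c).image Prod.fst
  have hS : ∀ i, i ∈ S ↔ (i, c) ∈ I := by simp [S]
  refine ⟨S.sup id, ?_, ?_⟩
  · refine Finset.sup_le fun i hi => ?_
    exact (mem_gridA.1 (hsub ((hS i).1 hi))).1.2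
  ext ⟨i, j⟩
  simp only [mem_filter, mem_column]
  constructor
  · rintro ⟨hij, rfl⟩
    exact ⟨⟨(mem_gridA.1 (hsub hij)).1.1, le_sup (f := id) ((hS i).2 hij)⟩, rfl⟩
  · rintro ⟨⟨hi1, hik⟩, rfl⟩
    have hne : S.Nonempty := by
      by_contra h
      rw [not_nonempty_iff_eq_empty] at h
      simp [h] at hik
      omega
    obtain ⟨m, hm, hmax⟩ := exists_mem_eq_sup S hne id
    exact ⟨hI.mem_of_le ((hS m).1 hm) hi1 (by simpa [hmax] using hik), rfl⟩

end IsNicePattern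

open Classical in
noncomputable def niceFinset (d n : ℕ) : Finset (Finset (ℕ × ℕ)) :=
  (gridA d n).powerset.filter IsNicePattern

lemma mem_niceFinset {d n : ℕ} {I : Finset (ℕ × ℕ)} :
    I ∈ niceFinset d n ↔ I ⊆ gridA d n ∧ IsNicePattern I := by
  simp [niceFinset]

lemma Gcount_eq_card (d n : ℕ) : Gcount d n = #(niceFinset d n) := by
  rw [Gcount, ← Set.ncard_coe_finset]
  congr 1
  ext I
  simp [mem_niceFinset, nice_iff]

lemma Gcount_zero (d : ℕ) : Gcount d 0 = 1 := by
  simp [Gcount_eq_card, niceFinset, gridA, filter_singleton, isNicePattern_empty]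

lemma filter_column_union {J : Finset (ℕ × ℕ)} {c : ℕ} (hJ : ∀ x ∈ J, x.2 ≠ c) (k : ℕ) :
    (column k c ∪ J).filter (fun x => x.2 = c) = column k c ∧
      (column k c ∪ J).filter (fun x => x.2 ≠ c) = J := by
  constructor <;> ext ⟨i, j⟩ <;> simp only [mem_filter, mem_union, mem_column]
  · exact ⟨fun ⟨h, hj⟩ => h.resolve_right fun h' => hJ _ h' hj, fun h => ⟨.inl h, h.2⟩⟩
  · exact ⟨fun ⟨h, hj⟩ => h.resolve_left fun h' => hj h'.2, fun h => ⟨.inr h, hJ _ h⟩⟩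

lemma snd_ne_of_mem_niceFinset {d n c : ℕ} {I : Finset (ℕ × ℕ)} (hI : I ∈ niceFinset d n)
    (hc : n < c) : ∀ x ∈ I, x.2 ≠ c := by
  rintro ⟨i, j⟩ hx
  have := mem_gridA.1 ((mem_niceFinset.1 hI).1 hx)
  dsimp only
  omega

lemma niceFinset_succ (d n : ℕ) :
    niceFinset d (n + 1) = niceFinset d n ∪
      (Icc 1 d ×ˢ niceFinset d (n - 1)).image fun p => column p.1 (n + 1) ∪ p.2 := by
  ext I
  simp only [mem_union, mem_image, mem_product, mem_Icc, mem_niceFinset, Prod.exists]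
  constructor
  · rintro ⟨hsub, hI⟩
    obtain ⟨k, hkd, hcol⟩ := hI.filter_snd_eq_column hsub (n + 1)
    rcases Nat.eq_zero_or_pos k with rfl | hk
    · refine .inl ⟨fun ⟨i, j⟩ hij => ?_, hI⟩
      have hj : j ≠ n + 1 := fun hj => by
        have : (i, j) ∈ I.filter (fun x => x.2 = n + 1) := mem_filter.2 ⟨hij, hj⟩
        simp [hcol] at this
        omega
      have := mem_gridA.1 (hsub hij)
      simp only [mem_gridA]
      omega
    · have htop : (1, n + 1) ∈ I :=
        (mem_filter.1 (hcol ▸ mem_column.2 ⟨⟨le_rfl, hk⟩, rfl⟩)).1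
      refine .inr ⟨k, I.filter (fun x => x.2 ≠ n + 1),
        ⟨⟨hk, hkd⟩, fun ⟨i, j⟩ hij => ?_, hI.filter_snd (· ≠ n + 1)⟩,
        by rw [← hcol, filter_union_filter_not_eq]⟩
      rw [mem_filter] at hij
      have := mem_gridA.1 (hsub hij.1)
      have hjn : j ≠ n := by
        rintro rfl
        exact hI.2 j this.2.1 (hI.mem_of_le hij.1 le_rfl this.1.1) htop
      simp only [mem_gridA]
      omega
  · rintro (⟨hsub, hI⟩ | ⟨k, J, ⟨⟨hk1, hkd⟩, hJsub, hJ⟩, rfl⟩)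
    · exact ⟨hsub.trans (gridA_mono (by omega)), hI⟩
    · have hJcol : ∀ x ∈ J, x.2 + 1 < n + 1 := fun ⟨i, j⟩ hx => by
        have := mem_gridA.1 (hJsub hx)
        dsimp only
        omega
      exact ⟨union_subset (column_subset_gridA hkd (by omega) le_rfl)
        (hJsub.trans (gridA_mono (by omega))), hJ.column_union k (n + 1) hJcol⟩

/-- For `n = 0` the truncated `n - 1 = 0` is still right: left of a nonempty first column
there is only the empty pattern. -/
lemma Gcount_succ (d n : ℕ) : Gcount d (n + 1) = Gcount d n + d * Gcount d (n - 1) := by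
  have hdisj : Disjoint (niceFinset d n)
      ((Icc 1 d ×ˢ niceFinset d (n - 1)).image fun p => column p.1 (n + 1) ∪ p.2) := by
    simp only [disjoint_left, mem_image, mem_product, mem_Icc, Prod.exists, not_exists,
      not_and]
    rintro _ hI k J ⟨⟨hk, -⟩, -⟩ rfl
    exact snd_ne_of_mem_niceFinset hI (Nat.lt_succ_self n) (1, n + 1)
      (mem_union_left _ (mem_column.2 ⟨⟨le_rfl, hk⟩, rfl⟩)) rfl
  have hinj : Set.InjOn (fun p : ℕ × Finset (ℕ × ℕ) => column p.1 (n + 1) ∪ p.2)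
      (Icc 1 d ×ˢ niceFinset d (n - 1) : Finset _) := by
    rintro ⟨k, J⟩ hkJ ⟨k', J'⟩ hkJ' h
    simp only [coe_product, Set.mem_prod, mem_coe] at hkJ hkJ' h
    have hn : n - 1 < n + 1 := by omega
    obtain ⟨hcol, hJ⟩ := filter_column_union (snd_ne_of_mem_niceFinset hkJ.2 hn) k
    obtain ⟨hcol', hJ'⟩ := filter_column_union (snd_ne_of_mem_niceFinset hkJ'.2 hn) k'
    rw [h] at hcol hJ
    rw [Prod.mk.injEq]
    exact ⟨by simpa using congrArg card (hcol.symm.trans hcol'), hJ.symm.trans hJ'⟩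
  rw [Gcount_eq_card, Gcount_eq_card, Gcount_eq_card, niceFinset_succ,
    card_union_of_disjoint hdisj, card_image_of_injOn hinj, card_product, Nat.card_Icc,
    Nat.add_sub_cancel]

theorem stmt12_general (d : ℕ) :
    PowerSeries.mk (fun n => (Gcount d n : ℚ)) =
      ((d : PowerSeries ℚ) * PowerSeries.X + 1) *
        (1 - PowerSeries.X - (d : PowerSeries ℚ) * PowerSeries.X ^ 2)⁻¹ := by
  have hrec (n : ℕ) : (Gcount d (n + 1) : ℚ) = Gcount d n + d * Gcount d (n - 1) := by
    exact_mod_cast Gcount_succ d n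
  rw [← map_natCast PowerSeries.C d, PowerSeries.eq_mul_inv_iff_mul_eq (by simp),
    mk_mul_eq_of_recurrence hrec, Gcount_zero]
  simp

theorem stmt12 (d : ℕ) (hd : 1 ≤ d) :
    PowerSeries.mk (fun n => (Gcount d n : ℚ)) =
      ((d : PowerSeries ℚ) * PowerSeries.X + 1) *
        (1 - PowerSeries.X - (d : PowerSeries ℚ) * PowerSeries.X ^ 2)⁻¹ :=
  stmt12_general d
end

section
/- For positive integers d and k, the formal power series 1/(1-q-dq^2)^k equals the sum over i from 1 to k of [binom(2k-1-i, k-1) d^{k-i} / (1+4d)^{(2k-i)/2}] times the sum over n ≥ 0 of binom(n+i-1, i-1)(x_d^{n+i} + (-1)^i y_d^{n+i}) q^n, where x_d = (1+√(1+4d))/2 and y_d = (1-√(1+4d))/2. -/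
/-!
Write `1 - X - dX² = (1 - xX)(1 - yX)`. Whenever `p + q = 1` one has the problem-of-points identity
`p^k ∑_{j<k} C(k-1+j, j) q^j + q^k ∑_{j<k} C(k-1+j, j) p^j = 1`, the two sums being truncations of
`p^{-k}` and `q^{-k}`. Apply it to `P = x/(x-y) · (1 - yX)` and `Q = -y/(x-y) · (1 - xX)`, which sum
to `1`, and divide by `((1 - xX)(1 - yX))^k`: the term of index `j` becomes a multiple of
`(1 - xX)^{-(k-j)}` or `(1 - yX)^{-(k-j)}`, whose coefficients are negative binomial coefficients.
-/

open Finset PowerSeries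

section CommRing

variable {R : Type*} [CommRing R]

/-- The truncation to degree `k` of the series of `(1 - q)^{-(k+1)}`. -/
def negBinomPartialSum (k : ℕ) (q : R) : R :=
  ∑ j ∈ range (k + 1), ((k + j).choose j : R) * q ^ j

theorem one_sub_mul_negBinomPartialSum_succ (k : ℕ) (q : R) :
    (1 - q) * negBinomPartialSum (k + 1) q =
      negBinomPartialSum k q + ((2 * k + 1).choose (k + 1) : R) * q ^ (k + 1)
        - ((2 * k + 2).choose (k + 1) : R) * q ^ (k + 2) := by
  set f : ℕ → R := fun j => ((k + 1 + j).choose j : R) * q ^ j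
  set g : ℕ → R := fun j => ((k + j).choose j : R) * q ^ j
  have pascal : ∀ j, f (j + 1) = q * f j + g (j + 1) := fun j => by
    simp only [f, g, show k + 1 + (j + 1) = k + 1 + j + 1 by ring, Nat.choose_succ_succ',
      show k + (j + 1) = k + 1 + j by ring]
    push_cast
    ring
  have hf : ∑ j ∈ range (k + 2), f j =
      q * ∑ j ∈ range (k + 1), f j + ∑ j ∈ range (k + 2), g j := by
    rw [sum_range_succ' f, sum_range_succ' g, mul_sum, ← add_assoc, ← sum_add_distrib]
    simp [f, g, pascal]
  have hf' := sum_range_succ f (k + 1)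
  have hg := sum_range_succ g (k + 1)
  simp only [f, g, show k + 1 + (k + 1) = 2 * k + 2 by ring,
    show k + (k + 1) = 2 * k + 1 by ring] at hf hf' hg
  unfold negBinomPartialSum
  linear_combination hf - q * hf' + hg

theorem pow_mul_negBinomPartialSum_add_eq_one {p q : R} (hpq : p + q = 1) (k : ℕ) :
    p ^ (k + 1) * negBinomPartialSum k q + q ^ (k + 1) * negBinomPartialSum k p = 1 := by
  obtain rfl : p = 1 - q := eq_sub_of_add_eq hpq
  induction k with
  | zero => simp [negBinomPartialSum]
  | succ k ih =>
    have hq := one_sub_mul_negBinomPartialSum_succ k q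
    have hp := one_sub_mul_negBinomPartialSum_succ k (1 - q)
    have central : ((2 * k + 2).choose (k + 1) : R) = 2 * (2 * k + 1).choose (k + 1) := by
      rw [Nat.choose_succ_succ', Nat.choose_symm_half]
      push_cast
      ring
    simp only [sub_sub_cancel] at hp
    linear_combination (1 - q) ^ (k + 1) * hq + q ^ (k + 1) * hp + ih
      - (1 - q) ^ (k + 1) * q ^ (k + 1) * central

theorem one_sub_C_mul_X_pow_mul_rescale_invOneSubPow_eq_one (a : R) (i : ℕ) :
    (1 - C a * X) ^ i * rescale a (invOneSubPow R i : R⟦X⟧) = 1 := by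
  rw [← rescale_X, ← map_one (rescale a), ← map_sub, ← map_pow, ← map_mul,
    ← invOneSubPow_inv_eq_one_sub_pow, Units.inv_val]

theorem mk_choose_mul_pow_add_eq_rescale_invOneSubPow (a b : R) {i : ℕ} (hi : 0 < i) :
    mk (fun n => ((n + i - 1).choose (i - 1) : R) * (a ^ (n + i) + (-1) ^ i * b ^ (n + i))) =
      C (a ^ i) * rescale a (invOneSubPow R i : R⟦X⟧) +
        C ((-1) ^ i * b ^ i) * rescale b (invOneSubPow R i : R⟦X⟧) := by
  ext n
  simp only [coeff_mk, map_add, coeff_C_mul, coeff_rescale,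
    invOneSubPow_val_eq_mk_sub_one_add_choose_of_pos R _ hi, show n + i - 1 = i - 1 + n by omega]
  ring

end CommRing

theorem sum_Icc_one_sub_eq_sum_range {M : Type*} [AddCommMonoid M] (f : ℕ → M) (k : ℕ) :
    ∑ i ∈ Icc 1 k, f (k - i) = ∑ j ∈ range k, f j := by
  rw [← Ico_add_one_right_eq_Icc, sum_Ico_reflect f 1 le_rfl, range_eq_Ico]
  simp

theorem inv_one_sub_C_mul_X_mul_one_sub_C_mul_X_pow_eq_sum {K : Type*} [Field K] {a b : K}
    (hab : a ≠ b) {k : ℕ} (hk : 1 ≤ k) :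
    (((1 - C a * X) * (1 - C b * X)) ^ k)⁻¹ =
      ∑ i ∈ Icc 1 k, C (((2 * k - 1 - i).choose (k - 1) : K) * (-(a * b)) ^ (k - i) /
          (a - b) ^ (2 * k - i)) *
        mk (fun n => ((n + i - 1).choose (i - 1) : K) *
          (a ^ (n + i) + (-1) ^ i * b ^ (n + i))) := by
  set A : K⟦X⟧ := 1 - C a * X
  set B : K⟦X⟧ := 1 - C b * X
  have hPQ : C (a * (a - b)⁻¹) * B + C (-(b * (a - b)⁻¹)) * A = 1 := by
    have h : C (a - b)⁻¹ * (C a - C b) = 1 := by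
      rw [← map_sub, ← map_mul, inv_mul_cancel₀ (sub_ne_zero.2 hab), map_one]
    simp only [A, B, map_mul, map_neg]
    linear_combination h
  obtain ⟨m, rfl⟩ : ∃ m, k = m + 1 := ⟨k - 1, by omega⟩
  rw [eq_comm, eq_inv_iff_mul_eq_one (by simp [A, B]),
    ← pow_mul_negBinomPartialSum_add_eq_one hPQ m]
  unfold negBinomPartialSum
  rw [mul_sum, mul_sum, ← sum_add_distrib, ← sum_Icc_one_sub_eq_sum_range, sum_mul]
  refine sum_congr rfl fun i hi => ?_
  obtain ⟨hi1, him⟩ := mem_Icc.1 hi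
  obtain ⟨j, hj⟩ : ∃ j, m + 1 = i + j := ⟨m + 1 - i, by omega⟩
  rw [show m + 1 - i = j by omega, show 2 * (m + 1) - 1 - i = m + j by omega,
    show m + 1 - 1 = m by omega, show 2 * (m + 1) - i = i + 2 * j by omega, Nat.choose_symm_add,
    hj, mk_choose_mul_pow_add_eq_rescale_invOneSubPow a b hi1]
  have hA : A ^ i * rescale a (invOneSubPow K i : K⟦X⟧) = 1 :=
    one_sub_C_mul_X_pow_mul_rescale_invOneSubPow_eq_one a i
  have hB : B ^ i * rescale b (invOneSubPow K i : K⟦X⟧) = 1 :=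
    one_sub_C_mul_X_pow_mul_rescale_invOneSubPow_eq_one b i
  simp only [div_eq_mul_inv, ← inv_pow, map_mul, map_pow, map_neg, map_natCast, map_one]
  clear_value A B
  linear_combination
    ((m + j).choose j : K⟦X⟧) * (-(C a * C b)) ^ j * C (a - b)⁻¹ ^ (i + 2 * j) *
      (C a ^ i * A ^ j * B ^ (i + j) * hA + (-1) ^ i * C b ^ i * B ^ j * A ^ (i + j) * hB)

theorem stmt13_general (d k : ℕ) (hk : 1 ≤ k) :
    (((1 - PowerSeries.X - (d : PowerSeries ℝ) * PowerSeries.X ^ 2) ^ k))⁻¹ =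
      ∑ i ∈ Finset.Icc 1 k,
        PowerSeries.C (R := ℝ)
            ((Nat.choose (2 * k - 1 - i) (k - 1) * (d : ℝ) ^ (k - i)) /
              (Real.sqrt (1 + 4 * d)) ^ (2 * k - i)) *
          PowerSeries.mk (fun n =>
            (Nat.choose (n + i - 1) (i - 1) : ℝ) *
              (((1 + Real.sqrt (1 + 4 * d)) / 2) ^ (n + i) +
                (-1 : ℝ) ^ i * ((1 - Real.sqrt (1 + 4 * d)) / 2) ^ (n + i))) := by
  set s := Real.sqrt (1 + 4 * d)
  set x := (1 + s) / 2
  set y := (1 - s) / 2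
  have hs : s ^ 2 = 1 + 4 * d := Real.sq_sqrt (by positivity)
  have hsub : x - y = s := by ring
  have hprod : -(x * y) = d := by linear_combination hs / 4
  have hxy : x ≠ y := by
    rw [← sub_ne_zero, hsub]
    exact (Real.sqrt_pos.2 (by positivity)).ne'
  have hsum_C : C x + C y = (1 : ℝ⟦X⟧) := by
    rw [← map_add, show x + y = 1 by ring, map_one]
  have hmul_C : C x * C y = -(d : ℝ⟦X⟧) := by
    rw [← map_mul, ← neg_neg (x * y), hprod, map_neg, map_natCast]
  have hfactor : 1 - X - (d : ℝ⟦X⟧) * X ^ 2 = (1 - C x * X) * (1 - C y * X) := by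
    linear_combination X * hsum_C - X ^ 2 * hmul_C
  rw [hfactor, inv_one_sub_C_mul_X_mul_one_sub_C_mul_X_pow_eq_sum hxy hk, hprod, hsub]

theorem stmt13 (d k : ℕ) (hd : 1 ≤ d) (hk : 1 ≤ k) :
    (((1 - PowerSeries.X - (d : PowerSeries ℝ) * PowerSeries.X ^ 2) ^ k))⁻¹ =
      ∑ i ∈ Finset.Icc 1 k,
        PowerSeries.C (R := ℝ)
            ((Nat.choose (2 * k - 1 - i) (k - 1) * (d : ℝ) ^ (k - i)) /
              (Real.sqrt (1 + 4 * d)) ^ (2 * k - i)) *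
          PowerSeries.mk (fun n =>
            (Nat.choose (n + i - 1) (i - 1) : ℝ) *
              (((1 + Real.sqrt (1 + 4 * d)) / 2) ^ (n + i) +
                (-1 : ℝ) ^ i * ((1 - Real.sqrt (1 + 4 * d)) / 2) ^ (n + i))) :=
  stmt13_general d k hk
end

section
/- The coefficient of q^n in 1/(1-q-dq^2)^2 equals (1/(4d+1))·((n+1)M_d(n+2) + (n+3)d·M_d(n)), where M_d is defined by M_d(0)=1, M_d(1)=d+1 (equivalently M_d(-1)=0), and M_d(n)=M_d(n-1)+d·M_d(n-2). -/
/-!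
Multiplying by `P = 1 - q - a q²` turns a sequence `u` into the sequence
`u₀, u₁ - u₀, u_{n+2} - u_{n+1} - a uₙ`, so the recurrence for `M` says `P · ∑ Mₙ qⁿ = 1`.
Hence `1 / P² = ∑ cₙ qⁿ` as soon as `P · ∑ cₙ qⁿ = ∑ Mₙ qⁿ`, i.e. as soon as the closed form `c`
satisfies `c_{n+2} = c_{n+1} + a cₙ + M_{n+2}`; after expressing everything through `Mₙ, M_{n+1}`
this is a polynomial identity.
-/

open PowerSeries

theorem PowerSeries.mul_mk_of_recurrence {R : Type*} [CommRing R] (a : R) {u v : ℕ → R}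
    (h0 : u 0 = v 0) (h1 : u 1 = u 0 + v 1)
    (hrec : ∀ n, u (n + 2) = u (n + 1) + a * u n + v (n + 2)) :
    (1 - X - C a * X ^ 2) * mk u = mk v := by
  ext (_ | _ | n)
  · simp [h0]
  · simp [sub_mul, mul_assoc, coeff_succ_X_mul, coeff_X_pow_mul', h1]
  · simp [sub_mul, mul_assoc, coeff_succ_X_mul, coeff_X_pow_mul', hrec]
    ring

section Fibonacci

variable {K : Type*} [Field K] {a : K} {M : ℕ → K}

def fibSqCoeff (a : K) (M : ℕ → K) (n : ℕ) : K :=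
  1 / (4 * a + 1) * ((n + 1) * M (n + 2) + (n + 3) * a * M n)

theorem mul_mk_fib_eq_one (hM0 : M 0 = 1) (hM1 : M 1 = 1)
    (hrec : ∀ n, M (n + 2) = M (n + 1) + a * M n) :
    (1 - X - C a * X ^ 2) * mk M = 1 := by
  refine (mul_mk_of_recurrence a (v := fun n => coeff n 1) ?_ ?_ fun n => ?_).trans (by ext; simp)
    <;> simp [hM0, hM1, hrec, coeff_one]

theorem mul_mk_fibSqCoeff (ha : 4 * a + 1 ≠ 0) (hM0 : M 0 = 1) (hM1 : M 1 = 1)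
    (hrec : ∀ n, M (n + 2) = M (n + 1) + a * M n) :
    (1 - X - C a * X ^ 2) * mk (fibSqCoeff a M) = mk M := by
  have hM2 : M 2 = 1 + a := by rw [hrec, hM0, hM1]; ring
  have hM3 : M 3 = 1 + 2 * a := by rw [hrec, hM1, hM2]; ring
  refine mul_mk_of_recurrence a ?_ ?_ fun n => ?_ <;> unfold fibSqCoeff <;> push_cast
  · rw [hM0, hM2]; field_simp; ring
  · rw [hM0, hM1, hM2, hM3]; field_simp; ring
  · rw [show n + 2 + 2 = n + 4 by ring, show n + 1 + 2 = n + 3 by ring,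
      hrec (n + 2), hrec (n + 1), hrec n]
    field_simp
    ring

theorem coeff_inv_sq_eq_fibSqCoeff (ha : 4 * a + 1 ≠ 0) (hM0 : M 0 = 1) (hM1 : M 1 = 1)
    (hrec : ∀ n, M (n + 2) = M (n + 1) + a * M n) (n : ℕ) :
    coeff n ((1 - X - C a * X ^ 2) ^ 2)⁻¹ = fibSqCoeff a M n := by
  have hinv : ((1 - X - C a * X ^ 2) ^ 2)⁻¹ = mk (fibSqCoeff a M) := by
    rw [inv_eq_iff_mul_eq_one (by simp), mul_comm, sq, mul_assoc,
      mul_mk_fibSqCoeff ha hM0 hM1 hrec, mul_mk_fib_eq_one hM0 hM1 hrec]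
  rw [hinv, coeff_mk]

end Fibonacci

theorem stmt14_general (d : ℕ) (M : ℕ → ℚ) (hM0 : M 0 = 1) (hM1 : M 1 = 1)
    (hrec : ∀ n : ℕ, M (n + 2) = M (n + 1) + d * M n) (n : ℕ) :
    PowerSeries.coeff n
        ((1 - PowerSeries.X - (d : PowerSeries ℚ) * PowerSeries.X ^ 2) ^ 2)⁻¹ =
      (1 / (4 * (d : ℚ) + 1)) * (((n : ℚ) + 1) * M (n + 2) + ((n : ℚ) + 3) * d * M n) := by
  rw [← map_natCast (C (R := ℚ)) d]
  exact coeff_inv_sq_eq_fibSqCoeff (by positivity) hM0 hM1 hrec n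

theorem stmt14 (d : ℕ) (hd : 1 ≤ d) (M : ℕ → ℚ) (hM0 : M 0 = 1) (hM1 : M 1 = 1)
    (hrec : ∀ n : ℕ, M (n + 2) = M (n + 1) + d * M n) (n : ℕ) :
    PowerSeries.coeff n
        ((1 - PowerSeries.X - (d : PowerSeries ℚ) * PowerSeries.X ^ 2) ^ 2)⁻¹ =
      (1 / (4 * (d : ℚ) + 1)) * (((n : ℚ) + 1) * M (n + 2) + ((n : ℚ) + 3) * d * M n) :=
  stmt14_general d M hM0 hM1 hrec n
end

section
/- The coefficient of q^n in 1/(1-q-dq^2)^3 equals (3d(n+1)/(4d+1)^2 + binom(n+2,2)/(4d+1))·M_d(n+2) + (3d^2(n+3)/(4d+1)^2)·M_d(n), where M_d satisfies M_d(-1)=0, M_d(0)=1, M_d(n)=M_d(n-1)+d·M_d(n-2). -/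
/-!
With `A = 1 - q - d q²` and `F = 1/A = Σ M_d(n) qⁿ`, differentiating gives `F' = (1 + 2dq)/A²`, and
`(1 + 2dq)² = (4d + 1) - 4dA` turns this into `1/A² = ((1 + 2dq) F' + 4d F)/(4d + 1)`; one more
derivative expresses `1/A³` through `F`, `F'`, `F''`. Rather than differentiating, we take the resulting
coefficient sequences of `1/A²` and `1/A³` as given and check that multiplying by `A` steps each one
down to the previous: for a series `Σ g(n) qⁿ` this amounts to `g(n+2) - g(n+1) - d g(n)` being the next
sequence, which the recurrence of `M_d` verifies.
-/

open PowerSeries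

theorem mk_mul_one_sub_X_sub_C_mul_X_sq {R : Type*} [CommRing R] {c : R} {g h : ℕ → R}
    (h0 : g 0 = h 0) (h1 : g 1 - g 0 = h 1)
    (hstep : ∀ n, g (n + 2) - g (n + 1) - c * g n = h (n + 2)) :
    mk g * (1 - X - C c * X ^ 2) = mk h := by
  have hexp : mk g * (1 - X - C c * X ^ 2) = mk g - mk g * X ^ 1 - C c * (mk g * X ^ 2) := by
    ring
  ext n
  rw [hexp]
  simp only [map_sub, coeff_C_mul, coeff_mul_X_pow', coeff_mk]
  rcases n with _ | _ | n
  · simp [h0]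
  · simpa using h1
  · simpa using hstep n

section GeneralizedFibonacci

variable (d : ℚ) (M : ℕ → ℚ)

def invSqCoeff (n : ℕ) : ℚ :=
  (((n : ℚ) + 1) * M (n + 1) + 2 * d * ((n : ℚ) + 2) * M n) / (4 * d + 1)

def invCubeCoeff (n : ℕ) : ℚ :=
  (3 * d * ((n : ℚ) + 1) / (4 * d + 1) ^ 2 + ((n : ℚ) + 1) * ((n : ℚ) + 2) / 2 / (4 * d + 1))
      * M (n + 2) +
    3 * d ^ 2 * ((n : ℚ) + 3) / (4 * d + 1) ^ 2 * M n

variable {d M}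

theorem invSqCoeff_step (hs : 4 * d + 1 ≠ 0) (hrec : ∀ n, M (n + 2) = M (n + 1) + d * M n)
    (n : ℕ) :
    invSqCoeff d M (n + 2) - invSqCoeff d M (n + 1) - d * invSqCoeff d M n = M (n + 2) := by
  -- `field_simp` only finds the side condition in the form of its own normalised denominator.
  have hs' : d * 4 + 1 ≠ 0 := by rwa [mul_comm]
  simp only [invSqCoeff]
  push_cast
  rw [hrec (n + 1), hrec n]
  field_simp
  ring

theorem invCubeCoeff_step (hs : 4 * d + 1 ≠ 0) (hrec : ∀ n, M (n + 2) = M (n + 1) + d * M n)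
    (n : ℕ) :
    invCubeCoeff d M (n + 2) - invCubeCoeff d M (n + 1) - d * invCubeCoeff d M n =
      invSqCoeff d M (n + 2) := by
  have hs' : d * 4 + 1 ≠ 0 := by rwa [mul_comm]
  simp only [invCubeCoeff, invSqCoeff]
  push_cast
  rw [hrec (n + 2), hrec (n + 1), hrec n]
  field_simp
  ring

variable (hM0 : M 0 = 1) (hM1 : M 1 = 1) (hrec : ∀ n, M (n + 2) = M (n + 1) + d * M n)
include hM0 hM1 hrec

theorem mk_mul_one_sub_X_sub_C_mul_X_sq_eq_one : mk M * (1 - X - C d * X ^ 2) = 1 := by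
  calc mk M * (1 - X - C d * X ^ 2) = mk fun n => if n = 0 then 1 else 0 :=
        mk_mul_one_sub_X_sub_C_mul_X_sq (by simp [hM0]) (by simp [hM0, hM1]) fun n => by
          simp [hrec n]
    _ = 1 := by
        ext n
        simp [coeff_one]

variable (hs : 4 * d + 1 ≠ 0)
include hs

theorem mk_invSqCoeff_mul : mk (invSqCoeff d M) * (1 - X - C d * X ^ 2) = mk M := by
  have hs' : d * 4 + 1 ≠ 0 := by rwa [mul_comm]
  refine mk_mul_one_sub_X_sub_C_mul_X_sq ?_ ?_ (invSqCoeff_step hs hrec)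
  · simp only [invSqCoeff, hM0, hM1]
    field_simp
    ring
  · simp only [invSqCoeff, hrec 0, hM0, hM1]
    field_simp
    ring

theorem mk_invCubeCoeff_mul :
    mk (invCubeCoeff d M) * (1 - X - C d * X ^ 2) = mk (invSqCoeff d M) := by
  have hs' : d * 4 + 1 ≠ 0 := by rwa [mul_comm]
  refine mk_mul_one_sub_X_sub_C_mul_X_sq ?_ ?_ (invCubeCoeff_step hs hrec)
  · simp only [invCubeCoeff, invSqCoeff, hrec 0, hM0, hM1]
    field_simp
    ring
  · simp only [invCubeCoeff, invSqCoeff, hrec 1, hrec 0, hM0, hM1]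
    field_simp
    ring

theorem inv_one_sub_X_sub_C_mul_X_sq_pow_three :
    ((1 - X - C d * X ^ 2) ^ 3)⁻¹ = mk (invCubeCoeff d M) := by
  have hA : constantCoeff ((1 - X - C d * X ^ 2) ^ 3 : ℚ⟦X⟧) ≠ 0 := by simp
  symm
  rw [PowerSeries.eq_inv_iff_mul_eq_one hA, pow_three, ← mul_assoc, ← mul_assoc,
    mk_invCubeCoeff_mul hM0 hM1 hrec hs, mk_invSqCoeff_mul hM0 hM1 hrec hs,
    mk_mul_one_sub_X_sub_C_mul_X_sq_eq_one hM0 hM1 hrec]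

end GeneralizedFibonacci

theorem stmt15_general (d : ℕ) (M : ℕ → ℚ) (hM0 : M 0 = 1) (hM1 : M 1 = 1)
    (hrec : ∀ n : ℕ, M (n + 2) = M (n + 1) + d * M n) (n : ℕ) :
    PowerSeries.coeff (R := ℚ) n
        ((1 - PowerSeries.X - (d : PowerSeries ℚ) * PowerSeries.X ^ 2) ^ 3)⁻¹ =
      (3 * (d : ℚ) * ((n : ℚ) + 1) / (4 * (d : ℚ) + 1) ^ 2 +
          (Nat.choose (n + 2) 2 : ℚ) / (4 * (d : ℚ) + 1)) * M (n + 2) +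
        (3 * (d : ℚ) ^ 2 * ((n : ℚ) + 3) / (4 * (d : ℚ) + 1) ^ 2) * M n := by
  have hs : 4 * (d : ℚ) + 1 ≠ 0 := by positivity
  rw [← map_natCast (C (R := ℚ)) d, inv_one_sub_X_sub_C_mul_X_sq_pow_three hM0 hM1 hrec hs,
    coeff_mk, invCubeCoeff, Nat.cast_choose_two]
  push_cast
  ring

theorem stmt15 (d : ℕ) (hd : 1 ≤ d) (M : ℕ → ℚ) (hM0 : M 0 = 1) (hM1 : M 1 = 1)
    (hrec : ∀ n : ℕ, M (n + 2) = M (n + 1) + d * M n) (n : ℕ) :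
    PowerSeries.coeff (R := ℚ) n
        ((1 - PowerSeries.X - (d : PowerSeries ℚ) * PowerSeries.X ^ 2) ^ 3)⁻¹ =
      (3 * (d : ℚ) * ((n : ℚ) + 1) / (4 * (d : ℚ) + 1) ^ 2 +
          (Nat.choose (n + 2) 2 : ℚ) / (4 * (d : ℚ) + 1)) * M (n + 2) +
        (3 * (d : ℚ) ^ 2 * ((n : ℚ) + 3) / (4 * (d : ℚ) + 1) ^ 2) * M n :=
  stmt15_general d M hM0 hM1 hrec n
end

section
/- Let α = (1+√5)/2 and let G(a,b)(n) = Σ_{I nice ⊆ A(1,n)} σ_0(I)^a |I|^b with σ_0(I) = Σ_{(i,j)∈I} j. Then G(a,b)(n) = 2^{-a}·5^{-(a+b+1)/2}·n^{2a+b}·α^{n+2-a-b} + O(n^{2a+b-1}·α^n) as n → ∞. -/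
def sigmaW (m : ℕ) (I : Finset (ℕ × ℕ)) : ℕ := ∑ p ∈ I, ((p.1 - 1) * m + p.2)

/-!
The nonadjacent subsets of `{1, …, n + 2}` are those of `{1, …, n + 1}` together with the sets
`T ∪ {n + 2}` for `T` a nonadjacent subset of `{1, …, n}`. Expanding `(σ + n + 2)^a (|T| + 1)^b`
binomially gives the recurrence
`G(a,b)(n+2) = G(a,b)(n+1) + G(a,b)(n) + ∑_{(p,q) ≠ (a,b)} C(a,p) C(b,q) (n+2)^(a-p) G(p,q)(n)`.
By induction on `a + b`, `G(a,b)(n) = P(n) φ^n + Q(n) ψ^n` exactly, with `deg P, deg Q ≤ 2a + b`.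
For `r ∈ {φ, ψ}`, an inhomogeneity `R(n) r^n` with `deg R ≤ k` is matched by a particular solution
`P(n) r^n` with `deg P ≤ k + 1`, and the coefficient of `n^(k+1)` in `P` is the coefficient of
`n^k` in `R` divided by `(k + 1) r (2r - 1)`. Only `(p,q) = (a-1,b)` and `(a,b-1)` reach degree
`2a + b - 1`, so the top coefficients satisfy a two-term recursion. Its solution is
`2^(-a) 5^(-(a+b+1)/2) φ^(2-a-b)`. Because `|ψ| < 1`, everything else is `O(n^(2a+b-1) φ^n)`.
-/

open Finset Polynomial

def nonadjacentSubsets (n : ℕ) : Finset (Finset ℕ) :=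
  (Icc 1 n).powerset.filter fun S => ∀ j ∈ S, j + 1 ∉ S

theorem mem_nonadjacentSubsets {n : ℕ} {S : Finset ℕ} :
    S ∈ nonadjacentSubsets n ↔ S ⊆ Icc 1 n ∧ ∀ j ∈ S, j + 1 ∉ S := by
  rw [nonadjacentSubsets, mem_filter, mem_powerset]

theorem notMem_of_mem_nonadjacentSubsets {n m : ℕ} {S : Finset ℕ} (hS : S ∈ nonadjacentSubsets n)
    (hm : n < m) : m ∉ S := fun h => by
  have := (mem_Icc.1 ((mem_nonadjacentSubsets.1 hS).1 h)).2
  omega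

theorem nice_one_iff {n : ℕ} {I : Finset (ℕ × ℕ)} :
    Nice 1 n I ↔ ∃ S ∈ nonadjacentSubsets n, S.map (Function.Embedding.sectR 1 ℕ) = I := by
  have hgrid : gridA 1 n = (Icc 1 n).map (Function.Embedding.sectR 1 ℕ) := by
    rw [gridA, Icc_self, singleton_product]; rfl
  simp only [Nice, hgrid, subset_map_iff, mem_nonadjacentSubsets]
  constructor
  · rintro ⟨⟨S, hS, rfl⟩, -, hadj⟩
    refine ⟨S, ⟨hS, fun j hj hj1 => hadj j ?_ ?_ (by simpa) (by simpa)⟩, rfl⟩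
    · exact (mem_Icc.1 (hS hj)).1
    · have := (mem_Icc.1 (hS hj1)).2; omega
  · rintro ⟨S, ⟨hS, hadj⟩, rfl⟩
    refine ⟨⟨S, hS, rfl⟩, fun i j hi h => ?_, fun j _ _ hj hj1 => ?_⟩
    · simp only [mem_map, Function.Embedding.sectR_apply, Prod.mk.injEq, Nat.right_eq_add,
        exists_eq_right_right] at h
      omega
    · simp only [mem_map, Function.Embedding.sectR_apply, Prod.mk.injEq, true_and,
        exists_eq_right] at hj hj1
      exact hadj j hj hj1

noncomputable def moment (a b n : ℕ) : ℝ :=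
  ∑ S ∈ nonadjacentSubsets n, (∑ j ∈ S, (j : ℝ)) ^ a * (#S : ℝ) ^ b

theorem finsum_nice_one_eq_moment (a b n : ℕ) :
    ∑ᶠ I ∈ {I : Finset (ℕ × ℕ) | Nice 1 n I}, (sigmaW 0 I : ℝ) ^ a * (#I : ℝ) ^ b =
      moment a b n := by
  have hset : {I : Finset (ℕ × ℕ) | Nice 1 n I} =
      ↑((nonadjacentSubsets n).map (mapEmbedding (Function.Embedding.sectR 1 ℕ)).toEmbedding) := by
    ext I
    simp [nice_one_iff]
  rw [hset, finsum_mem_coe_finset, sum_map, moment]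
  refine sum_congr rfl fun S _ => ?_
  simp [sigmaW]

theorem sum_nonadjacentSubsets_add_two {M : Type*} [AddCommMonoid M] (f : Finset ℕ → M) (n : ℕ) :
    ∑ S ∈ nonadjacentSubsets (n + 2), f S =
      ∑ S ∈ nonadjacentSubsets (n + 1), f S + ∑ T ∈ nonadjacentSubsets n, f (insert (n + 2) T) := by
  have hsplit : nonadjacentSubsets (n + 2) =
      nonadjacentSubsets (n + 1) ∪ (nonadjacentSubsets n).image (insert (n + 2)) := by
    ext S
    simp only [mem_union, mem_image, mem_nonadjacentSubsets, subset_iff, mem_Icc]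
    constructor
    · rintro ⟨hS, hadj⟩
      by_cases h : n + 2 ∈ S
      · have hn1 : n + 1 ∉ S := fun h' => hadj _ h' h
        refine Or.inr ⟨S.erase (n + 2), ⟨fun j hj => ?_, fun j hj hj1 =>
          hadj j (mem_of_mem_erase hj) (mem_of_mem_erase hj1)⟩, insert_erase h⟩
        have := hS (mem_of_mem_erase hj)
        have := ne_of_mem_erase hj
        have : j ≠ n + 1 := by rintro rfl; exact hn1 (mem_of_mem_erase hj)
        omega
      · refine Or.inl ⟨fun j hj => ?_, hadj⟩
        have := hS hj
        have : j ≠ n + 2 := by rintro rfl; contradiction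
        omega
    · rintro (⟨hS, hadj⟩ | ⟨T, ⟨hT, hadj⟩, rfl⟩)
      · exact ⟨fun j hj => by have := hS hj; omega, hadj⟩
      · refine ⟨fun j hj => ?_, fun j hj hj1 => ?_⟩
        · rcases mem_insert.1 hj with rfl | hj
          · omega
          · have := hT hj; omega
        · rcases mem_insert.1 hj with rfl | hj <;> rcases mem_insert.1 hj1 with h | h
          · omega
          · have := hT h; omega
          · have := hT hj; omega
          · exact hadj j hj h
  rw [hsplit, sum_union, sum_image]
  · have hlt : n < n + 2 := by omega
    intro T hT T' hT' h
    rw [← erase_insert (notMem_of_mem_nonadjacentSubsets hT hlt), h,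
      erase_insert (notMem_of_mem_nonadjacentSubsets hT' hlt)]
  · rw [disjoint_right]
    rintro _ hS h
    obtain ⟨T, -, rfl⟩ := mem_image.1 hS
    exact notMem_of_mem_nonadjacentSubsets h (Nat.lt_succ_self _) (mem_insert_self _ _)

theorem card_nonadjacentSubsets (n : ℕ) : #(nonadjacentSubsets n) = Nat.fib (n + 2) := by
  induction n using Nat.twoStepInduction with
  | zero => decide
  | one => decide
  | more n ih ih' =>
    simp only [card_eq_sum_ones] at ih ih' ⊢
    rw [sum_nonadjacentSubsets_add_two, ih', ih, Nat.fib_add_two (n := n + 2), add_comm]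

theorem moment_zero_zero (n : ℕ) : moment 0 0 n = Nat.fib (n + 2) := by
  simp [moment, card_nonadjacentSubsets]

theorem moment_add_two (a b n : ℕ) :
    moment a b (n + 2) = moment a b (n + 1) +
      ∑ p ∈ range (a + 1) ×ˢ range (b + 1),
        (a.choose p.1 * b.choose p.2 : ℝ) * ((n : ℝ) + 2) ^ (a - p.1) * moment p.1 p.2 n := by
  simp only [moment, mul_sum]
  rw [sum_nonadjacentSubsets_add_two]
  congr 1
  rw [sum_comm]
  refine sum_congr rfl fun T hT => ?_
  replace hT := notMem_of_mem_nonadjacentSubsets hT (show n < n + 2 by omega)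
  rw [sum_insert hT, card_insert_of_notMem hT, sum_product]
  push_cast
  rw [add_comm ((n : ℝ) + 2), add_pow, add_pow, sum_mul_sum]
  refine sum_congr rfl fun i _ => sum_congr rfl fun j _ => ?_
  ring

open Real
open scoped goldenRatio

theorem coeff_taylor_of_natDegree_le_succ {P : ℝ[X]} {k : ℕ} (hP : P.natDegree ≤ k + 1) (c : ℝ) :
    (taylor c P).coeff k = P.coeff k + (k + 1) * c * P.coeff (k + 1) := by
  rw [taylor_coeff, eval_eq_sum_range' (n := 2) (by rw [natDegree_hasseDeriv]; omega)]
  simp only [hasseDeriv_coeff, sum_range_succ, range_one, sum_singleton, zero_add, Nat.choose_self,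
    Nat.cast_one, one_mul, pow_zero, mul_one, add_comm 1 k, Nat.choose_succ_self_right,
    Nat.cast_add, pow_one, add_right_inj]
  ring

theorem coeff_taylor_of_natDegree_le {P : ℝ[X]} {k : ℕ} (hP : P.natDegree ≤ k) (c : ℝ) :
    (taylor c P).coeff k = P.coeff k := by
  rw [taylor_coeff, eval_eq_sum_range' (n := 1) (by rw [natDegree_hasseDeriv]; omega)]
  simp [hasseDeriv_coeff]

-- When `r ^ 2 = r + 1`, `r ^ n * (fibOp r P).eval n` is `u (n + 2) - u (n + 1) - u n`
-- for `u n = P.eval n * r ^ n`.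
noncomputable def fibOp (r : ℝ) : ℝ[X] →ₗ[ℝ] ℝ[X] :=
  r ^ 2 • taylor 2 - r • taylor 1 - LinearMap.id

theorem eval_fibOp (r : ℝ) (P : ℝ[X]) (x : ℝ) :
    (fibOp r P).eval x = r ^ 2 * P.eval (x + 2) - r * P.eval (x + 1) - P.eval x := by
  simp [fibOp, taylor_eval]

theorem coeff_fibOp (r : ℝ) (P : ℝ[X]) (k : ℕ) :
    (fibOp r P).coeff k = r ^ 2 * (taylor 2 P).coeff k - r * (taylor 1 P).coeff k - P.coeff k := by
  simp [fibOp]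

theorem natDegree_fibOp_le {r : ℝ} (hr : r ^ 2 = r + 1) {P : ℝ[X]} {k : ℕ}
    (hP : P.natDegree ≤ k + 1) :
    (fibOp r P).natDegree ≤ k := by
  rw [natDegree_le_iff_coeff_eq_zero]
  intro m hm
  rcases (Nat.succ_le_of_lt hm).eq_or_lt with rfl | hm
  · rw [coeff_fibOp, coeff_taylor_of_natDegree_le hP, coeff_taylor_of_natDegree_le hP]
    linear_combination P.coeff (k + 1) * hr
  · have hlt : ∀ Q : ℝ[X], Q.natDegree = P.natDegree → Q.coeff m = 0 := fun Q hQ =>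
      coeff_eq_zero_of_natDegree_lt (by omega)
    rw [coeff_fibOp, hlt _ (natDegree_taylor _ _), hlt _ (natDegree_taylor _ _), hlt _ rfl]
    ring

theorem coeff_fibOp_of_natDegree_le {r : ℝ} (hr : r ^ 2 = r + 1) {P : ℝ[X]} {k : ℕ}
    (hP : P.natDegree ≤ k + 1) :
    (fibOp r P).coeff k = (k + 1) * (r * (2 * r - 1)) * P.coeff (k + 1) := by
  rw [coeff_fibOp, coeff_taylor_of_natDegree_le_succ hP, coeff_taylor_of_natDegree_le_succ hP]
  linear_combination P.coeff k * hr

theorem exists_fibOp_eq {r : ℝ} (hr : r ^ 2 = r + 1) (d : ℕ) {R : ℝ[X]} (hR : R.degree < d) :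
    ∃ P : ℝ[X], fibOp r P = R ∧ P.natDegree ≤ d := by
  have hκ : r * (2 * r - 1) ≠ 0 := by
    intro h
    rcases mul_eq_zero.1 h with h | h <;> nlinarith
  induction d generalizing R with
  | zero =>
    refine ⟨0, ?_, by simp⟩
    rw [map_zero, eq_comm, ← degree_eq_bot]
    simpa [Nat.WithBot.lt_zero_iff] using hR
  | succ d ih =>
    set P₀ := C (R.coeff d / ((d + 1) * (r * (2 * r - 1)))) * X ^ (d + 1)
    have hP₀ : P₀.natDegree ≤ d + 1 := natDegree_C_mul_X_pow_le _ _
    obtain ⟨P₁, hP₁, hP₁d⟩ := ih (R := R - fibOp r P₀) (by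
      rw [degree_lt_iff_coeff_zero] at hR ⊢
      intro m hm
      rcases hm.eq_or_lt with rfl | hm
      · rw [coeff_sub, coeff_fibOp_of_natDegree_le hr hP₀]
        simp only [P₀, coeff_C_mul_X_pow, if_true]
        rw [mul_div_cancel₀ _ (mul_ne_zero (by positivity) hκ), sub_self]
      · rw [coeff_sub, hR m hm,
          coeff_eq_zero_of_natDegree_lt ((natDegree_fibOp_le hr hP₀).trans_lt hm), sub_zero])
    refine ⟨P₀ + P₁, by rw [map_add, hP₁, add_sub_cancel], ?_⟩
    exact (natDegree_add_le _ _).trans (max_le hP₀ (hP₁d.trans (Nat.le_succ d)))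

theorem exists_eq_mul_goldenRatio_pow_add_mul_goldenConj_pow {w : ℕ → ℝ}
    (hw : ∀ n, w (n + 2) = w (n + 1) + w n) : ∃ A B : ℝ, ∀ n, w n = A * φ ^ n + B * ψ ^ n := by
  have h5 : √5 ≠ 0 := by positivity
  refine ⟨(w 1 - ψ * w 0) / √5, (φ * w 0 - w 1) / √5, fun n => ?_⟩
  induction n using Nat.twoStepInduction with
  | zero =>
    field_simp
    linear_combination -w 0 * goldenRatio_sub_goldenConj
  | one =>
    field_simp
    linear_combination -w 1 * goldenRatio_sub_goldenConj
  | more n ih ih' =>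
    rw [hw, ih, ih']
    linear_combination (-(w 1 - ψ * w 0) / √5 * φ ^ n) * goldenRatio_sq -
      ((φ * w 0 - w 1) / √5 * ψ ^ n) * goldenConj_sq

-- Recording the coefficient of `n ^ d * φ ^ n` as a second component makes it linear in the
-- sequence, so that it passes through sums.
def goldenExpansion (d : ℕ) : Submodule ℝ ((ℕ → ℝ) × ℝ) where
  carrier := {x | ∃ P Q : ℝ[X], P.natDegree ≤ d ∧ Q.natDegree ≤ d ∧ P.coeff d = x.2 ∧
    ∀ n : ℕ, x.1 n = P.eval (n : ℝ) * φ ^ n + Q.eval (n : ℝ) * ψ ^ n}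
  add_mem' := by
    rintro x y ⟨P, Q, hP, hQ, hc, hu⟩ ⟨P', Q', hP', hQ', hc', hv⟩
    refine ⟨P + P', Q + Q', natDegree_add_le_of_degree_le hP hP',
      natDegree_add_le_of_degree_le hQ hQ', by simp_all, fun n => ?_⟩
    rw [Prod.fst_add, Pi.add_apply, hu, hv, eval_add, eval_add]
    ring
  zero_mem' := ⟨0, 0, by simp, by simp, by simp, by simp⟩
  smul_mem' := by
    rintro k x ⟨P, Q, hP, hQ, hc, hu⟩
    refine ⟨C k * P, C k * Q, (natDegree_C_mul_le _ _).trans hP, (natDegree_C_mul_le _ _).trans hQ,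
      by simp_all, fun n => ?_⟩
    rw [Prod.smul_fst, Pi.smul_apply, smul_eq_mul, hu, eval_C_mul, eval_C_mul]
    ring

namespace goldenExpansion

variable {u : ℕ → ℝ} {c : ℝ} {d : ℕ}

theorem mem_iff : (u, c) ∈ goldenExpansion d ↔ ∃ P Q : ℝ[X], P.natDegree ≤ d ∧ Q.natDegree ≤ d ∧
    P.coeff d = c ∧ ∀ n : ℕ, u n = P.eval (n : ℝ) * φ ^ n + Q.eval (n : ℝ) * ψ ^ n :=
  Iff.rfl

theorem mem_of_le (h : (u, c) ∈ goldenExpansion d) {d' : ℕ} (hd : d ≤ d') :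
    (u, if d = d' then c else 0) ∈ goldenExpansion d' := by
  obtain ⟨P, Q, hP, hQ, hc, hu⟩ := mem_iff.1 h
  refine ⟨P, Q, hP.trans hd, hQ.trans hd, ?_, hu⟩
  split_ifs with hdd
  · exact hdd ▸ hc
  · exact coeff_eq_zero_of_natDegree_lt (by omega)

theorem add_pow_mul_mem (h : (u, c) ∈ goldenExpansion d) (x : ℝ) (k : ℕ) :
    (fun n : ℕ => ((n : ℝ) + x) ^ k * u n, c) ∈ goldenExpansion (d + k) := by
  obtain ⟨P, Q, hP, hQ, hc, hu⟩ := mem_iff.1 h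
  have hX : ((X + C x) ^ k).natDegree ≤ k := by rw [natDegree_pow_X_add_C]
  refine ⟨P * (X + C x) ^ k, Q * (X + C x) ^ k, natDegree_mul_le_of_le hP hX,
    natDegree_mul_le_of_le hQ hX, ?_, fun n => ?_⟩
  · rw [coeff_mul_add_eq_of_natDegree_le hP hX, hc, coeff_X_add_C_pow]
    simp
  · simp only [hu, eval_mul, eval_pow, eval_add, eval_X, eval_C]
    ring

theorem mem_of_fib_rec {g : ℕ → ℝ} (hg : (g, c) ∈ goldenExpansion d)
    (hu : ∀ n, u (n + 2) = u (n + 1) + u n + g n) :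
    (u, c / ((d + 1) * (φ * √5))) ∈ goldenExpansion (d + 1) := by
  obtain ⟨R, S, hR, hS, rfl, hg⟩ := mem_iff.1 hg
  have hdeg : ∀ T : ℝ[X], T.natDegree ≤ d → T.degree < ↑(d + 1) := fun T hT =>
    (degree_le_of_natDegree_le hT).trans_lt (WithBot.coe_lt_coe.2 d.lt_succ_self)
  obtain ⟨P₀, rfl, hP₀⟩ := exists_fibOp_eq goldenRatio_sq (d + 1) (hdeg R hR)
  obtain ⟨Q₀, rfl, hQ₀⟩ := exists_fibOp_eq goldenConj_sq (d + 1) (hdeg S hS)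
  obtain ⟨A, B, hAB⟩ := exists_eq_mul_goldenRatio_pow_add_mul_goldenConj_pow
    (w := fun n => u n - (P₀.eval (n : ℝ) * φ ^ n + Q₀.eval (n : ℝ) * ψ ^ n)) fun n => by
      simp only [hu, hg, eval_fibOp]
      push_cast
      ring
  refine ⟨P₀ + C A, Q₀ + C B,
    natDegree_add_le_of_degree_le hP₀ ((natDegree_C A).trans_le d.succ_pos.le),
    natDegree_add_le_of_degree_le hQ₀ ((natDegree_C B).trans_le d.succ_pos.le), ?_, fun n => ?_⟩
  · have h2φ : 2 * φ - 1 = √5 := by rw [goldenRatio]; ring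
    rw [coeff_add, coeff_C, if_neg d.succ_ne_zero, add_zero,
      coeff_fibOp_of_natDegree_le goldenRatio_sq hP₀, h2φ]
    field_simp
  · simp only [eval_add, eval_C]
    linear_combination hAB n

theorem const_mul_mem (h : (u, c) ∈ goldenExpansion d) (k : ℝ) :
    (fun n => k * u n, k * c) ∈ goldenExpansion d :=
  Submodule.smul_mem _ k h

theorem sum_mem {ι : Type*} (s : Finset ι) {u : ι → ℕ → ℝ} {c : ι → ℝ}
    (h : ∀ i ∈ s, (u i, c i) ∈ goldenExpansion d) :
    (fun n => ∑ i ∈ s, u i n, ∑ i ∈ s, c i) ∈ goldenExpansion d := by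
  have := Submodule.sum_mem _ h
  rwa [← prod_mk_sum, sum_fn] at this

end goldenExpansion

noncomputable def leadingConst (a b : ℕ) : ℝ :=
  φ ^ 2 / √5 / (2 * (√5 * φ)) ^ a / (√5 * φ) ^ b

theorem natCast_mul_leadingConst_pred_left (a b : ℕ) :
    (a : ℝ) * leadingConst (a - 1) b = 2 * a * (√5 * φ) * leadingConst a b := by
  rcases a with _ | a
  · simp
  · simp only [leadingConst, add_tsub_cancel_right, pow_succ]
    field_simp

theorem natCast_mul_leadingConst_pred_right (a b : ℕ) :
    (b : ℝ) * leadingConst a (b - 1) = b * (√5 * φ) * leadingConst a b := by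
  rcases b with _ | b
  · simp
  · simp only [leadingConst, add_tsub_cancel_right, pow_succ]
    field_simp

theorem leadingConst_mul_goldenRatio_pow (a b n : ℕ) :
    (2 : ℝ) ^ (-(a : ℤ)) * (5 : ℝ) ^ (-(((a : ℝ) + (b : ℝ) + 1) / 2)) *
      φ ^ ((n : ℤ) + 2 - (a : ℤ) - (b : ℤ)) = leadingConst a b * φ ^ n := by
  have h5 : (5 : ℝ) ^ (((a : ℝ) + (b : ℝ) + 1) / 2) = √5 ^ (a + b + 1) := by
    rw [Real.sqrt_eq_rpow, ← Real.rpow_natCast, ← Real.rpow_mul (by norm_num)]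
    push_cast
    ring_nf
  rw [Real.rpow_neg (by norm_num), h5, zpow_neg, zpow_natCast,
    show (n : ℤ) + 2 - a - b = ((n + 2 : ℕ) : ℤ) - ((a + b : ℕ) : ℤ) by push_cast; ring,
    zpow_sub₀ goldenRatio_ne_zero, zpow_natCast, zpow_natCast, leadingConst]
  simp only [mul_pow, pow_add]
  ring

theorem sum_choose_mul_choose_ite_eq {a b : ℕ} (hab : a + b ≠ 0) (f : ℕ → ℕ → ℝ) :
    ∑ p ∈ range (a + 1) ×ˢ range (b + 1),
      (if 2 * p.1 + p.2 + (a - p.1) = 2 * a + b - 1 then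
        (a.choose p.1 * b.choose p.2 : ℝ) * f p.1 p.2 else 0) =
      a * f (a - 1) b + b * f a (b - 1) := by
  rw [sum_eq_add_of_mem (a - 1, b) (a, b - 1) (by simp) (by simp)
    (by simp only [ne_eq, Prod.mk.injEq]; omega)]
  · congr 1
    · rcases a with _ | a
      · rw [if_neg (by omega)]; simp
      · rw [if_pos (by omega)]; simp
    · rcases b with _ | b
      · rw [if_neg (by omega)]; simp
      · rw [if_pos (by omega)]; simp
  · rintro ⟨i, j⟩ hp ⟨h1, h2⟩
    simp only [mem_product, mem_range] at hp
    rw [if_neg]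
    simp only [ne_eq, Prod.mk.injEq] at h1 h2
    omega

theorem moment_zero_zero_mem : (moment 0 0, leadingConst 0 0) ∈ goldenExpansion 0 := by
  refine goldenExpansion.mem_iff.2 ⟨C (φ ^ 2 / √5), C (-(ψ ^ 2 / √5)), by simp, by simp,
    by simp [leadingConst], fun n => ?_⟩
  rw [moment_zero_zero, coe_fib_eq]
  simp only [eval_C]
  ring

theorem moment_mem_goldenExpansion (a b : ℕ) :
    (moment a b, leadingConst a b) ∈ goldenExpansion (2 * a + b) := by
  induction hk : a + b using Nat.strong_induction_on generalizing a b with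
  | _ k ih =>
  rcases Nat.eq_zero_or_pos k with rfl | hk0
  · obtain ⟨rfl, rfl⟩ : a = 0 ∧ b = 0 := by omega
    exact moment_zero_zero_mem
  set E := (range (a + 1) ×ˢ range (b + 1)).erase (a, b)
  have hE : ∀ p ∈ E, p.1 ≤ a ∧ p.1 + p.2 < a + b := by
    intro p hp
    simp only [E, mem_erase, mem_product, mem_range, ne_eq, Prod.ext_iff] at hp
    omega
  have hterm : ∀ p ∈ E, (fun n : ℕ => (a.choose p.1 * b.choose p.2 : ℝ) *
      (((n : ℝ) + 2) ^ (a - p.1) * moment p.1 p.2 n),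
      if 2 * p.1 + p.2 + (a - p.1) = 2 * a + b - 1 then
        (a.choose p.1 * b.choose p.2 : ℝ) * leadingConst p.1 p.2 else 0) ∈
      goldenExpansion (2 * a + b - 1) := by
    intro p hp
    have := goldenExpansion.mem_of_le (d' := 2 * a + b - 1)
      (goldenExpansion.add_pow_mul_mem (ih _ (hk ▸ (hE p hp).2) p.1 p.2 rfl) 2 (a - p.1))
      (by have := hE p hp; omega)
    simpa only [mul_ite, mul_zero] using goldenExpansion.const_mul_mem this
      (a.choose p.1 * b.choose p.2 : ℝ)
  have hab : (a, b) ∈ range (a + 1) ×ˢ range (b + 1) := by simp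
  have hrec : ∀ n, moment a b (n + 2) = moment a b (n + 1) + moment a b n +
      ∑ p ∈ E, (a.choose p.1 * b.choose p.2 : ℝ) *
        (((n : ℝ) + 2) ^ (a - p.1) * moment p.1 p.2 n) := by
    intro n
    rw [moment_add_two, ← add_sum_erase _ _ hab]
    simp only [Nat.choose_self, Nat.cast_one, Nat.sub_self, pow_zero, one_mul, mul_assoc]
    ring
  have hd : ((2 * a + b - 1 : ℕ) : ℝ) + 1 = 2 * a + b := by
    rw [Nat.cast_sub (by omega)]
    push_cast
    ring
  have hc : (∑ p ∈ E, if 2 * p.1 + p.2 + (a - p.1) = 2 * a + b - 1 then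
      (a.choose p.1 * b.choose p.2 : ℝ) * leadingConst p.1 p.2 else 0) /
      ((((2 * a + b - 1 : ℕ) : ℝ) + 1) * (φ * √5)) = leadingConst a b := by
    simp only [E]
    rw [sum_erase _ (by rw [if_neg]; omega), sum_choose_mul_choose_ite_eq (by omega),
      natCast_mul_leadingConst_pred_left, natCast_mul_leadingConst_pred_right, hd]
    have : (2 * a + b : ℝ) ≠ 0 := by norm_cast; omega
    field_simp
  have key := goldenExpansion.mem_of_fib_rec (goldenExpansion.sum_mem E hterm) hrec
  rwa [Nat.sub_add_cancel (by omega : 1 ≤ 2 * a + b), hc] at key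

open Asymptotics Filter

theorem isBigO_zpow_sub_one_of_natCast_mul {f g : ℕ → ℝ} {d : ℕ}
    (h : (fun n : ℕ => (n : ℝ) * f n) =O[atTop] fun n => (n : ℝ) ^ d * g n) :
    f =O[atTop] fun n => (n : ℝ) ^ ((d : ℤ) - 1) * g n := by
  refine (h.mul (isBigO_refl (fun n : ℕ => (n : ℝ)⁻¹) atTop)).congr' ?_ ?_ <;>
    filter_upwards [eventually_ne_atTop 0] with n hn <;>
    have hn' : (n : ℝ) ≠ 0 := Nat.cast_ne_zero.2 hn
  · field_simp
  · rw [zpow_sub_one₀ hn', zpow_natCast]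
    ring

theorem isBigO_natCast_eval {T : ℝ[X]} {m : ℕ} (hT : T.degree ≤ m) :
    (fun n : ℕ => T.eval (n : ℝ)) =O[atTop] fun n : ℕ => (n : ℝ) ^ m := by
  have := (isBigO_atTop_of_degree_le (P := T) (Q := X ^ m) (by simpa using hT)).comp_tendsto
    tendsto_natCast_atTop_atTop
  simpa only [Function.comp_def, eval_pow, eval_X] using this

theorem isBigO_eval_mul_goldenRatio_pow_add {R Q : ℝ[X]} {d : ℕ} (hR : R.degree < d)
    (hQ : Q.natDegree ≤ d) :
    (fun n : ℕ => R.eval (n : ℝ) * φ ^ n + Q.eval (n : ℝ) * ψ ^ n) =O[atTop]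
      fun n : ℕ => (n : ℝ) ^ ((d : ℤ) - 1) * φ ^ n := by
  refine isBigO_zpow_sub_one_of_natCast_mul (d := d) ?_
  have hXR : (R * X).degree ≤ (d : WithBot ℕ) := by
    rw [degree_mul_X]
    exact Nat.WithBot.add_one_le_of_lt hR
  have hψ : (fun n : ℕ => (n : ℝ) * ψ ^ n) =O[atTop] fun n : ℕ => φ ^ n := by
    refine (tendsto_self_mul_const_pow_of_abs_lt_one ?_).isBigO_one ℝ |>.trans ?_
    · rw [abs_lt]
      exact ⟨neg_one_lt_goldenConj, goldenConj_neg.trans one_pos⟩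
    · refine isBigO_of_le _ fun n => ?_
      rw [norm_one, norm_pow, Real.norm_of_nonneg goldenRatio_pos.le]
      exact one_le_pow₀ one_lt_goldenRatio.le
  have hsplit : (fun n : ℕ => (n : ℝ) * (R.eval (n : ℝ) * φ ^ n + Q.eval (n : ℝ) * ψ ^ n)) =
      fun n : ℕ => (R * X).eval (n : ℝ) * φ ^ n + Q.eval (n : ℝ) * ((n : ℝ) * ψ ^ n) := by
    ext n
    simp only [eval_mul, eval_X]
    ring
  rw [hsplit]
  exact ((isBigO_natCast_eval hXR).mul (isBigO_refl _ _)).add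
    ((isBigO_natCast_eval (degree_le_of_natDegree_le hQ)).mul hψ)

theorem stmt18 (a b : ℕ) :
    (fun n : ℕ =>
        (∑ᶠ I ∈ {I : Finset (ℕ × ℕ) | Nice 1 n I},
            ((sigmaW 0 I : ℝ) ^ a * (I.card : ℝ) ^ b)) -
          (2 : ℝ) ^ (-(a : ℤ)) * (5 : ℝ) ^ (-(((a : ℝ) + (b : ℝ) + 1) / 2)) *
            (n : ℝ) ^ (2 * a + b) *
            ((1 + Real.sqrt 5) / 2) ^ ((n : ℤ) + 2 - (a : ℤ) - (b : ℤ))) =O[Filter.atTop]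
      (fun n : ℕ => (n : ℝ) ^ (2 * (a : ℤ) + (b : ℤ) - 1) * ((1 + Real.sqrt 5) / 2) ^ (n : ℕ)) := by
  obtain ⟨P, Q, hP, hQ, hPc, hG⟩ :=
    goldenExpansion.mem_iff.1 (moment_mem_goldenExpansion a b)
  set R := P - C (leadingConst a b) * X ^ (2 * a + b)
  have hR : R.degree < ↑(2 * a + b) := by
    rw [degree_lt_iff_coeff_zero]
    intro m hm
    rw [coeff_sub, coeff_C_mul_X_pow]
    rcases hm.eq_or_lt with rfl | hm
    · rw [if_pos rfl, hPc, sub_self]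
    · rw [if_neg hm.ne', coeff_eq_zero_of_natDegree_lt (hP.trans_lt hm), sub_zero]
  convert isBigO_eval_mul_goldenRatio_pow_add hR hQ using 2 with n
  · rw [finsum_nice_one_eq_moment, hG, mul_right_comm _ _ (φ ^ _),
      leadingConst_mul_goldenRatio_pow]
    simp only [R, eval_sub, eval_mul, eval_C, eval_pow, eval_X]
    ring
  · push_cast
    ring
end
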